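/- arXiv:2003.07345 — 10 statements merged into one kernel-verified Lean document; each statement's English description precedes it below -/
import Mathlib

section
/- For a real symmetric matrix A ∈ S^n and d ∈ ℕ, ‖A‖_{γ,d} = 0 if and only if A is a diagonal matrix with trace zero. -/
/-!
If ‖A‖_{γ,d} = 0 then the form ∑ a_ij ⟨x_i, x_j⟩ vanishes at every family of unit vectors. Taking
x_k = ε_k e for a fixed unit vector e and signs ε_k shows that εᵀAε = 0 for every sign vector ε;
the mixed second difference of this quadratic form in the coordinates i ≠ j is 8 a_ij, so A is
diagonal. For diagonal A the form equals ∑ a_ii ‖x_i‖² = tr A at every family of unit vectors, which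
gives both the vanishing of the trace and the converse.
-/

noncomputable def gammaSemi {ι : Type*} [Fintype ι] (d : ℕ) (A : Matrix ι ι ℝ) : ℝ :=
  sSup { r | ∃ x : ι → EuclideanSpace ℝ (Fin d), (∀ i, ‖x i‖ = 1) ∧
    r = |∑ i, ∑ j, A i j * (inner ℝ (x i) (x j) : ℝ)| }

noncomputable def GammaNorm {ι : Type*} [Fintype ι] (d : ℕ) (A : Matrix ι ι ℝ) : ℝ :=
  sSup { r | ∃ x : ι → EuclideanSpace ℝ (Fin d), (∀ i, ‖x i‖ ≤ 1) ∧
    r = |∑ i, ∑ j, A i j * (inner ℝ (x i) (x j) : ℝ)| }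

noncomputable def GNorm {ι κ : Type*} [Fintype ι] [Fintype κ] (d : ℕ) (B : Matrix ι κ ℝ) : ℝ :=
  sSup { r | ∃ (x : ι → EuclideanSpace ℝ (Fin d)) (y : κ → EuclideanSpace ℝ (Fin d)),
    (∀ i, ‖x i‖ ≤ 1) ∧ (∀ j, ‖y j‖ ≤ 1) ∧
    r = |∑ i, ∑ j, B i j * (inner ℝ (x i) (y j) : ℝ)| }

open Matrix

theorem Matrix.dotProduct_mulVec_mixed_diff {ι R : Type*} [Fintype ι] [CommRing R]
    (A : Matrix ι ι R) (u p q : ι → R) :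
    (u + p + q) ⬝ᵥ A *ᵥ (u + p + q) - (u + p) ⬝ᵥ A *ᵥ (u + p) - (u + q) ⬝ᵥ A *ᵥ (u + q)
      + u ⬝ᵥ A *ᵥ u = p ⬝ᵥ A *ᵥ q + q ⬝ᵥ A *ᵥ p := by
  simp only [mulVec_add, dotProduct_add, add_dotProduct]
  ring

theorem Matrix.IsSymm.apply_eq_zero_of_forall_sign {ι : Type*} [Fintype ι] [DecidableEq ι]
    {A : Matrix ι ι ℝ} (hA : A.IsSymm) (hsign : ∀ v : ι → ℝ, (∀ k, |v k| = 1) → v ⬝ᵥ A *ᵥ v = 0)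
    {i j : ι} (hij : i ≠ j) : A i j = 0 := by
  set u : ι → ℝ := fun _ => 1
  set p : ι → ℝ := Pi.single i (-2)
  set q : ι → ℝ := Pi.single j (-2)
  have hsign_u : ∀ k, |u k| = 1 := fun k => abs_one
  have hsign_up : ∀ k, |(u + p) k| = 1 := fun k => by
    by_cases hk : k = i <;> simp [u, p, hk]; norm_num
  have hsign_uq : ∀ k, |(u + q) k| = 1 := fun k => by
    by_cases hk : k = j <;> simp [u, q, hk]; norm_num
  have hsign_upq : ∀ k, |(u + p + q) k| = 1 := fun k => by
    by_cases hki : k = i <;> by_cases hkj : k = j <;>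
      simp [u, p, q, hki, hkj, hij] <;> norm_num
  have hmixed := A.dotProduct_mulVec_mixed_diff u p q
  rw [hsign _ hsign_upq, hsign _ hsign_up, hsign _ hsign_uq, hsign _ hsign_u] at hmixed
  have hpq : p ⬝ᵥ A *ᵥ q = 4 * A i j := by simp [p, q, mulVec_single]; ring
  have hqp : q ⬝ᵥ A *ᵥ p = 4 * A i j := by simp [p, q, mulVec_single, hA.apply i j]; ring
  linarith

section GramForm

variable {ι E : Type*} [Fintype ι] [NormedAddCommGroup E] [InnerProductSpace ℝ E]

noncomputable def gramForm (A : Matrix ι ι ℝ) (x : ι → E) : ℝ :=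
  ∑ i, ∑ j, A i j * inner ℝ (x i) (x j)

theorem abs_gramForm_le (A : Matrix ι ι ℝ) {x : ι → E} (hx : ∀ i, ‖x i‖ ≤ 1) :
    |gramForm A x| ≤ ∑ i, ∑ j, |A i j| := by
  refine (Finset.abs_sum_le_sum_abs _ _).trans <| Finset.sum_le_sum fun i _ =>
    (Finset.abs_sum_le_sum_abs _ _).trans <| Finset.sum_le_sum fun j _ => ?_
  calc |A i j * inner ℝ (x i) (x j)|
      ≤ |A i j| * (‖x i‖ * ‖x j‖) := by
        rw [abs_mul]; gcongr; exact abs_real_inner_le_norm _ _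
    _ ≤ |A i j| * 1 := by
        gcongr; exact mul_le_one₀ (hx i) (norm_nonneg _) (hx j)
    _ = |A i j| := mul_one _

theorem gramForm_smul_const (A : Matrix ι ι ℝ) (v : ι → ℝ) (e : E) :
    gramForm A (fun k => v k • e) = ‖e‖ ^ 2 * (v ⬝ᵥ A *ᵥ v) := by
  simp only [gramForm, real_inner_smul_left, real_inner_smul_right, real_inner_self_eq_norm_sq,
    dotProduct, mulVec, Finset.mul_sum]
  exact Finset.sum_congr rfl fun _ _ => Finset.sum_congr rfl fun _ _ => by ring

theorem gramForm_eq_trace {A : Matrix ι ι ℝ} (hA : ∀ i j, i ≠ j → A i j = 0) {x : ι → E}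
    (hx : ∀ i, ‖x i‖ = 1) : gramForm A x = A.trace := by
  refine Finset.sum_congr rfl fun i _ => ?_
  rw [Finset.sum_eq_single i (fun j _ hji => by rw [hA i j hji.symm, zero_mul])
    (fun hi => absurd (Finset.mem_univ i) hi), real_inner_self_eq_norm_sq, hx i, one_pow, mul_one,
    diag_apply]

end GramForm

theorem gammaSemi_eq_zero_iff_forall_gramForm_eq_zero {ι : Type*} [Fintype ι] (d : ℕ)
    (A : Matrix ι ι ℝ) :
    gammaSemi d A = 0 ↔
      ∀ x : ι → EuclideanSpace ℝ (Fin d), (∀ i, ‖x i‖ = 1) → gramForm A x = 0 := by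
  change sSup {r | ∃ x : ι → EuclideanSpace ℝ (Fin d), (∀ i, ‖x i‖ = 1) ∧ r = |gramForm A x|} = 0
    ↔ _
  constructor
  · intro hsup x hx
    have hbdd : BddAbove {r | ∃ x : ι → EuclideanSpace ℝ (Fin d),
        (∀ i, ‖x i‖ = 1) ∧ r = |gramForm A x|} := by
      refine ⟨∑ i, ∑ j, |A i j|, ?_⟩
      rintro r ⟨y, hy, rfl⟩
      exact abs_gramForm_le A fun i => (hy i).le
    have hle := le_csSup hbdd ⟨x, hx, rfl⟩
    rw [hsup] at hle
    exact abs_nonpos_iff.mp hle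
  · intro hzero
    -- An empty set also has supremum `0` in `ℝ`.
    have hsub : {r | ∃ x : ι → EuclideanSpace ℝ (Fin d),
        (∀ i, ‖x i‖ = 1) ∧ r = |gramForm A x|} ⊆ {0} := by
      rintro r ⟨x, hx, rfl⟩
      simp [hzero x hx]
    rcases Set.subset_singleton_iff_eq.mp hsub with hempty | hsingle
    · rw [hempty, Real.sSup_empty]
    · rw [hsingle, csSup_singleton]

/-- ‖A‖_{γ,d} = 0 iff A is diagonal with zero trace. -/
theorem gammaSemi_eq_zero_iff (n d : ℕ) (hd : 1 ≤ d)
    (A : Matrix (Fin n) (Fin n) ℝ) (hA : A.IsSymm) :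
    gammaSemi d A = 0 ↔ ((∀ i j, i ≠ j → A i j = 0) ∧ A.trace = 0) := by
  rw [gammaSemi_eq_zero_iff_forall_gramForm_eq_zero]
  constructor
  · intro hzero
    obtain ⟨e, he⟩ : ∃ e : EuclideanSpace ℝ (Fin d), ‖e‖ = 1 :=
      ⟨EuclideanSpace.single ⟨0, hd⟩ 1, by simp⟩
    have hsign : ∀ v : Fin n → ℝ, (∀ k, |v k| = 1) → v ⬝ᵥ A *ᵥ v = 0 := fun v hv => by
      simpa [gramForm_smul_const, he] using
        hzero (fun k => v k • e) fun k => by rw [norm_smul, Real.norm_eq_abs, hv, he, one_mul]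
    have hdiag : ∀ i j, i ≠ j → A i j = 0 := fun i j => hA.apply_eq_zero_of_forall_sign hsign
    exact ⟨hdiag, by rw [← gramForm_eq_trace hdiag fun _ => he, hzero _ fun _ => he]⟩
  · rintro ⟨hdiag, htrace⟩ x hx
    rw [gramForm_eq_trace hdiag hx, htrace]
end

section
/- For every real symmetric matrix A ∈ S^n and every d ∈ ℕ: ‖A‖_{Γ,d} = max { ‖D A D‖_{γ,d} : D = diag(δ_1,...,δ_n), δ_i ∈ [0,1] }. -/
open Matrix

section

variable {ι E : Type*} [Fintype ι] [NormedAddCommGroup E] [InnerProductSpace ℝ E]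

theorem abs_sum_mul_inner_le_sum_abs (A : Matrix ι ι ℝ) {x : ι → E} (hx : ∀ i, ‖x i‖ ≤ 1) :
    |∑ i, ∑ j, A i j * inner ℝ (x i) (x j)| ≤ ∑ i, ∑ j, |A i j| := by
  refine (Finset.abs_sum_le_sum_abs _ _).trans (Finset.sum_le_sum fun i _ => ?_)
  refine (Finset.abs_sum_le_sum_abs _ _).trans (Finset.sum_le_sum fun j _ => ?_)
  have hinner : |inner ℝ (x i) (x j)| ≤ 1 :=
    (abs_real_inner_le_norm _ _).trans <|
      mul_le_one₀ (hx i) (norm_nonneg _) (hx j)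
  rw [abs_mul]
  exact mul_le_of_le_one_right (abs_nonneg _) hinner

theorem sum_diagonal_mul_mul_diagonal_inner [DecidableEq ι] (A : Matrix ι ι ℝ) (δ : ι → ℝ) (y : ι → E) :
    ∑ i, ∑ j, (diagonal δ * A * diagonal δ) i j * inner ℝ (y i) (y j) =
      ∑ i, ∑ j, A i j * inner ℝ (δ i • y i) (δ j • y j) := by
  refine Finset.sum_congr rfl fun i _ => Finset.sum_congr rfl fun j _ => ?_
  simp only [mul_diagonal, diagonal_mul, real_inner_smul_left, real_inner_smul_right]
  ring

theorem exists_norm_eq_one_and_eq_norm_smul [Nontrivial E] (x : E) :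
    ∃ u : E, ‖u‖ = 1 ∧ x = ‖x‖ • u := by
  by_cases hx : x = 0
  · obtain ⟨u, hu⟩ := exists_norm_eq E zero_le_one
    exact ⟨u, hu, by simp [hx]⟩
  · refine ⟨‖x‖⁻¹ • x, norm_smul_inv_norm hx, ?_⟩
    rw [smul_smul, mul_inv_cancel₀ (norm_ne_zero_iff.mpr hx), one_smul]

end

section

variable {ι : Type*} [Fintype ι] {d : ℕ}

theorem le_gammaSemi (A : Matrix ι ι ℝ) {x : ι → EuclideanSpace ℝ (Fin d)}
    (hx : ∀ i, ‖x i‖ = 1) : |∑ i, ∑ j, A i j * inner ℝ (x i) (x j)| ≤ gammaSemi d A :=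
  le_csSup ⟨_, by
    rintro _ ⟨y, hy, rfl⟩
    exact abs_sum_mul_inner_le_sum_abs A fun i => (hy i).le⟩ ⟨x, hx, rfl⟩

theorem le_GammaNorm (A : Matrix ι ι ℝ) {x : ι → EuclideanSpace ℝ (Fin d)}
    (hx : ∀ i, ‖x i‖ ≤ 1) : |∑ i, ∑ j, A i j * inner ℝ (x i) (x j)| ≤ GammaNorm d A :=
  le_csSup ⟨_, by
    rintro _ ⟨y, hy, rfl⟩
    exact abs_sum_mul_inner_le_sum_abs A hy⟩ ⟨x, hx, rfl⟩

theorem GammaNorm_nonneg (A : Matrix ι ι ℝ) : 0 ≤ GammaNorm d A :=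
  (abs_nonneg _).trans (le_GammaNorm A (x := 0) fun _ => by simp)

theorem gammaSemi_diagonal_mul_mul_diagonal_le_GammaNorm [DecidableEq ι] (A : Matrix ι ι ℝ) {δ : ι → ℝ}
    (hδ : ∀ i, δ i ∈ Set.Icc (0 : ℝ) 1) :
    gammaSemi d (diagonal δ * A * diagonal δ) ≤ GammaNorm d A := by
  refine Real.sSup_le ?_ (GammaNorm_nonneg A)
  rintro _ ⟨y, hy, rfl⟩
  rw [sum_diagonal_mul_mul_diagonal_inner]
  refine le_GammaNorm A fun i => ?_
  rw [norm_smul, hy i, mul_one, Real.norm_of_nonneg (hδ i).1]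
  exact (hδ i).2

theorem le_gammaSemi_diagonal_norm_mul_mul_diagonal_norm [DecidableEq ι] (hd : 1 ≤ d) (A : Matrix ι ι ℝ)
    (x : ι → EuclideanSpace ℝ (Fin d)) :
    |∑ i, ∑ j, A i j * inner ℝ (x i) (x j)| ≤
      gammaSemi d (diagonal (‖x ·‖) * A * diagonal (‖x ·‖)) := by
  have : Nonempty (Fin d) := ⟨⟨0, hd⟩⟩
  choose u hu hxu using fun i => exists_norm_eq_one_and_eq_norm_smul (x i)
  calc |∑ i, ∑ j, A i j * inner ℝ (x i) (x j)|
      = |∑ i, ∑ j, (diagonal (‖x ·‖) * A * diagonal (‖x ·‖)) i j * inner ℝ (u i) (u j)| := by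
        rw [sum_diagonal_mul_mul_diagonal_inner]; simp only [← hxu]
    _ ≤ _ := le_gammaSemi _ hu

end

theorem GammaNorm_eq_sup_gammaSemi_diag_general (n d : ℕ) (hd : 1 ≤ d)
    (A : Matrix (Fin n) (Fin n) ℝ) :
    GammaNorm d A = sSup { r | ∃ δ : Fin n → ℝ, (∀ i, δ i ∈ Set.Icc (0:ℝ) 1) ∧
      r = gammaSemi d (Matrix.diagonal δ * A * Matrix.diagonal δ) } := by
  have hbdd : BddAbove { r | ∃ δ : Fin n → ℝ, (∀ i, δ i ∈ Set.Icc (0:ℝ) 1) ∧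
      r = gammaSemi d (Matrix.diagonal δ * A * Matrix.diagonal δ) } := by
    refine ⟨GammaNorm d A, ?_⟩
    rintro _ ⟨δ, hδ, rfl⟩
    exact gammaSemi_diagonal_mul_mul_diagonal_le_GammaNorm A hδ
  apply le_antisymm
  · refine csSup_le ⟨_, 0, fun _ => by simp, rfl⟩ ?_
    rintro _ ⟨x, hx, rfl⟩
    exact (le_gammaSemi_diagonal_norm_mul_mul_diagonal_norm hd A x).trans <|
      le_csSup hbdd ⟨_, fun i => ⟨norm_nonneg _, hx i⟩, rfl⟩
  · refine csSup_le ⟨_, 0, fun _ => ⟨le_rfl, zero_le_one⟩, rfl⟩ ?_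
    rintro _ ⟨δ, hδ, rfl⟩
    exact gammaSemi_diagonal_mul_mul_diagonal_le_GammaNorm A hδ

/-- ‖A‖_{Γ,d} = max over diagonal contractions of ‖DAD‖_{γ,d}. -/
theorem GammaNorm_eq_sup_gammaSemi_diag (n d : ℕ) (hd : 1 ≤ d)
    (A : Matrix (Fin n) (Fin n) ℝ) (hA : A.IsSymm) :
    GammaNorm d A = sSup { r | ∃ δ : Fin n → ℝ, (∀ i, δ i ∈ Set.Icc (0:ℝ) 1) ∧
      r = gammaSemi d (Matrix.diagonal δ * A * Matrix.diagonal δ) } :=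
  GammaNorm_eq_sup_gammaSemi_diag_general n d hd A
end

section
/- If A ∈ S^n is real positive semidefinite, then ‖A‖_{γ,d} = ‖A‖_{Γ,d} = ‖A‖_{G,d} for every d ∈ ℕ. -/
/-!
Write the positive semidefinite matrix as `A = Bᵀ B`. Then `∑ aᵢⱼ ⟪xᵢ, yⱼ⟫ = ⟪Bx, By⟫`, the inner
product in the `L²` product of copies of `E`, so the pairing is a positive semidefinite symmetric
form. By Cauchy–Schwarz, `|⟪Bx, By⟫| ≤ max (‖Bx‖²) (‖By‖²)`, which turns the bilinear norm `G` into
the quadratic norm `Γ`. The function `x ↦ ‖Bx‖²` is convex, and the product of closed unit balls is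
the convex hull of the product of unit spheres (for `E ≠ 0`), so by the maximum principle `Γ` is
already attained at unit vectors, which gives `γ`.
-/

open Finset Matrix
open scoped InnerProductSpace MatrixOrder

variable {ι κ E : Type*} [Fintype ι] [Fintype κ] [NormedAddCommGroup E] [InnerProductSpace ℝ E]

noncomputable def gramPairing (A : Matrix ι κ ℝ) (x : ι → E) (y : κ → E) : ℝ :=
  ∑ i, ∑ j, A i j * ⟪x i, y j⟫_ℝ

noncomputable def Matrix.mulVecL2 (B : Matrix κ ι ℝ) : (ι → E) →ₗ[ℝ] PiLp 2 (fun _ : κ => E) where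
  toFun x := WithLp.toLp 2 fun k => ∑ i, B k i • x i
  map_add' x y := by ext k; simp [smul_add, sum_add_distrib]
  map_smul' c x := by ext k; simp [smul_comm c, smul_sum]

lemma gramPairing_transpose_mul_self (B : Matrix κ ι ℝ) (x y : ι → E) :
    gramPairing (Bᵀ * B) x y = ⟪B.mulVecL2 x, B.mulVecL2 y⟫_ℝ := by
  simp only [gramPairing, PiLp.inner_apply, Matrix.mulVecL2, LinearMap.coe_mk, AddHom.coe_mk,
    sum_inner, inner_sum, real_inner_smul_left, real_inner_smul_right, mul_apply, transpose_apply,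
    sum_mul]
  conv_rhs => rw [sum_comm]; enter [2, j]; rw [sum_comm]
  rw [sum_comm]
  exact sum_congr rfl fun i _ => sum_congr rfl fun j _ => sum_congr rfl fun k _ => by ring

namespace Matrix.PosSemidef

variable {A : Matrix ι ι ℝ}

lemma exists_gramPairing_eq_inner (hA : A.PosSemidef) :
    ∃ L : (ι → E) →ₗ[ℝ] PiLp 2 (fun _ : ι => E), ∀ x y, gramPairing A x y = ⟪L x, L y⟫_ℝ := by
  classical
  obtain ⟨B, rfl⟩ := CStarAlgebra.nonneg_iff_eq_star_mul_self.mp hA.nonneg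
  exact ⟨B.mulVecL2, gramPairing_transpose_mul_self B⟩

lemma gramPairing_self_nonneg (hA : A.PosSemidef) (x : ι → E) : 0 ≤ gramPairing A x x := by
  obtain ⟨L, hL⟩ := hA.exists_gramPairing_eq_inner (E := E)
  exact hL x x ▸ real_inner_self_nonneg

lemma abs_gramPairing_le_max (hA : A.PosSemidef) (x y : ι → E) :
    |gramPairing A x y| ≤ max (gramPairing A x x) (gramPairing A y y) := by
  obtain ⟨L, hL⟩ := hA.exists_gramPairing_eq_inner (E := E)
  rw [hL, hL, hL, real_inner_self_eq_norm_mul_norm, real_inner_self_eq_norm_mul_norm]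
  refine (abs_real_inner_le_norm _ _).trans ?_
  rcases le_total ‖L x‖ ‖L y‖ with h | h
  · exact (mul_le_mul_of_nonneg_right h (norm_nonneg _)).trans (le_max_right _ _)
  · exact (mul_le_mul_of_nonneg_left h (norm_nonneg _)).trans (le_max_left _ _)

lemma convexOn_gramPairing_self (hA : A.PosSemidef) :
    ConvexOn ℝ Set.univ fun x : ι → E => gramPairing A x x := by
  obtain ⟨L, hL⟩ := hA.exists_gramPairing_eq_inner (E := E)
  have h := (convexOn_univ_norm.comp_linearMap L).pow (fun _ _ => norm_nonneg _) 2
  rw [Set.preimage_univ] at h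
  refine h.congr fun x _ => ?_
  simp [hL]

lemma exists_norm_eq_one_gramPairing_self_ge [Nontrivial E] (hA : A.PosSemidef) {x : ι → E}
    (hx : ∀ i, ‖x i‖ ≤ 1) :
    ∃ y : ι → E, (∀ i, ‖y i‖ = 1) ∧ gramPairing A x x ≤ gramPairing A y y := by
  have hmem : x ∈ convexHull ℝ (Set.univ.pi fun _ : ι => Metric.sphere (0 : E) 1) := by
    simpa [convexHull_sphere_eq_closedBall] using hx
  obtain ⟨y, hy, hxy⟩ :=
    hA.convexOn_gramPairing_self.exists_ge_of_mem_convexHull (Set.subset_univ _) hmem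
  exact ⟨y, by simpa using hy, hxy⟩

end Matrix.PosSemidef

/-- For positive semidefinite A, all three Grothendieck d-norms coincide. -/
theorem gammaSemi_eq_GammaNorm_eq_GNorm_of_posSemidef (n d : ℕ) (hd : 1 ≤ d)
    (A : Matrix (Fin n) (Fin n) ℝ) (hA : A.PosSemidef) :
    gammaSemi d A = GammaNorm d A ∧ GammaNorm d A = GNorm d A := by
  have : Nonempty (Fin d) := ⟨⟨0, hd⟩⟩
  have hQ (x : Fin n → EuclideanSpace ℝ (Fin d)) : |gramPairing A x x| = gramPairing A x x :=
    abs_of_nonneg (hA.gramPairing_self_nonneg x)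
  constructor <;> apply csSup_eq_csSup_of_forall_exists_le
  · rintro _ ⟨x, hx, rfl⟩
    exact ⟨_, ⟨x, fun i => (hx i).le, rfl⟩, le_rfl⟩
  · rintro _ ⟨x, hx, rfl⟩
    obtain ⟨y, hy, hxy⟩ := hA.exists_norm_eq_one_gramPairing_self_ge hx
    exact ⟨|gramPairing A y y|, ⟨y, hy, rfl⟩, (hQ x).trans_le (hxy.trans_eq (hQ y).symm)⟩
  · rintro _ ⟨x, hx, rfl⟩
    exact ⟨_, ⟨x, x, hx, hx, rfl⟩, le_rfl⟩
  · rintro _ ⟨x, y, hx, hy, rfl⟩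
    have hxy := hA.abs_gramPairing_le_max x y
    rcases le_total (gramPairing A x x) (gramPairing A y y) with h | h
    · exact ⟨|gramPairing A y y|, ⟨y, hy, rfl⟩, hxy.trans_eq ((max_eq_right h).trans (hQ y).symm)⟩
    · exact ⟨|gramPairing A x x|, ⟨x, hx, rfl⟩, hxy.trans_eq ((max_eq_left h).trans (hQ x).symm)⟩
end

section
/- Let A ∈ S^n be real positive semidefinite and B ∈ S^n satisfy −A ⪯ B ⪯ A (in the Loewner order). Then for every d ∈ ℕ, ‖B‖_{G,d} ≤ ‖A‖_{G,d}. -/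
/-!
Write `Φ_M = Matrix.innerPairing M`, i.e. `Φ_M(x, y) = ∑ i j, M i j ⟪x i, y j⟫`. Positive
semidefiniteness of `M` makes `Φ_M(z, z) ≥ 0` also for vector-valued `z`, by Schur's product
theorem. Evaluating `Φ_{A-B}` and `Φ_{A+B}` at `x + y` and `x - y` and adding gives
`2 |Φ_B(x, y)| ≤ Φ_A(x, x) + Φ_A(y, y)`, and each term on the right is at most `‖A‖_{G,d}`.
-/

open Matrix Finset
open scoped InnerProductSpace

namespace Matrix

variable {ι κ E : Type*} [Fintype ι] [Fintype κ] [NormedAddCommGroup E] [InnerProductSpace ℝ E]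

noncomputable def innerPairing (M : Matrix ι κ ℝ) : (ι → E) →ₗ[ℝ] (κ → E) →ₗ[ℝ] ℝ :=
  ∑ i, ∑ j, M i j • (innerₗ E).compl₁₂ (LinearMap.proj i) (LinearMap.proj j)

@[simp]
theorem innerPairing_apply (M : Matrix ι κ ℝ) (x : ι → E) (y : κ → E) :
    innerPairing M x y = ∑ i, ∑ j, M i j * ⟪x i, y j⟫_ℝ := by
  simp [innerPairing, LinearMap.sum_apply]

theorem innerPairing_add (A B : Matrix ι κ ℝ) :
    innerPairing (E := E) (A + B) = innerPairing A + innerPairing B := by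
  refine LinearMap.ext₂ fun x y ↦ ?_
  simp only [innerPairing_apply, LinearMap.add_apply, add_apply, add_mul, sum_add_distrib]

theorem innerPairing_sub (A B : Matrix ι κ ℝ) :
    innerPairing (E := E) (A - B) = innerPairing A - innerPairing B := by
  refine LinearMap.ext₂ fun x y ↦ ?_
  simp only [innerPairing_apply, LinearMap.sub_apply, sub_apply, sub_mul, sum_sub_distrib]

theorem innerPairing_transpose (M : Matrix ι κ ℝ) (x : ι → E) (y : κ → E) :
    innerPairing Mᵀ y x = innerPairing M x y := by
  simp only [innerPairing_apply, transpose_apply, real_inner_comm (x _)]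
  exact sum_comm

theorem abs_innerPairing_le (M : Matrix ι κ ℝ) {x : ι → E} {y : κ → E}
    (hx : ∀ i, ‖x i‖ ≤ 1) (hy : ∀ j, ‖y j‖ ≤ 1) :
    |innerPairing M x y| ≤ ∑ i, ∑ j, |M i j| := by
  rw [innerPairing_apply]
  refine (abs_sum_le_sum_abs _ _).trans <| sum_le_sum fun i _ ↦
    (abs_sum_le_sum_abs _ _).trans <| sum_le_sum fun j _ ↦ ?_
  have hinner : |⟪x i, y j⟫_ℝ| ≤ 1 :=
    (abs_real_inner_le_norm _ _).trans <| mul_le_one₀ (hx i) (norm_nonneg _) (hy j)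
  rw [abs_mul]
  exact mul_le_of_le_one_right (abs_nonneg _) hinner

/-- `Φ_M(z, z)` is the sum of the entries of `M ⊙ gram ℝ z`, which is positive semidefinite by
Schur's product theorem. -/
theorem PosSemidef.innerPairing_self_nonneg {M : Matrix ι ι ℝ} (hM : M.PosSemidef) (z : ι → E) :
    0 ≤ innerPairing M z z := by
  have := (hM.hadamard (posSemidef_gram ℝ z)).dotProduct_mulVec_nonneg 1
  simpa [dotProduct, mulVec, hadamard_apply] using this

theorem abs_innerPairing_le_of_posSemidef {A B : Matrix ι ι ℝ}
    (h₁ : (A - B).PosSemidef) (h₂ : (A + B).PosSemidef) (x y : ι → E) :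
    |innerPairing B x y| ≤ (innerPairing A x x + innerPairing A y y) / 2 := by
  have hB : Bᵀ = B := by
    ext i j
    have h₁ij := h₁.1.apply i j
    have h₂ij := h₂.1.apply i j
    simp only [sub_apply, add_apply, star_trivial] at h₁ij h₂ij
    simp only [transpose_apply]
    linarith
  have hsymm : innerPairing B y x = innerPairing B x y := by
    rw [← innerPairing_transpose, hB]
  have h₁p := h₁.innerPairing_self_nonneg (x + y)
  have h₁m := h₁.innerPairing_self_nonneg (x - y)
  have h₂p := h₂.innerPairing_self_nonneg (x + y)
  have h₂m := h₂.innerPairing_self_nonneg (x - y)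
  simp only [innerPairing_add, innerPairing_sub, map_add, map_sub, LinearMap.add_apply,
    LinearMap.sub_apply, hsymm] at h₁p h₁m h₂p h₂m
  rw [abs_le]
  constructor <;> linarith

end Matrix

section GNorm

variable {ι κ : Type*} [Fintype ι] [Fintype κ] {d : ℕ}

theorem le_GNorm (M : Matrix ι κ ℝ) {x : ι → EuclideanSpace ℝ (Fin d)}
    {y : κ → EuclideanSpace ℝ (Fin d)} (hx : ∀ i, ‖x i‖ ≤ 1) (hy : ∀ j, ‖y j‖ ≤ 1) :
    |innerPairing M x y| ≤ GNorm d M := by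
  refine le_csSup ⟨∑ i, ∑ j, |M i j|, ?_⟩ ⟨x, y, hx, hy, by rw [innerPairing_apply]⟩
  rintro _ ⟨x', y', hx', hy', rfl⟩
  rw [← innerPairing_apply]
  exact abs_innerPairing_le M hx' hy'

theorem GNorm_le {M : Matrix ι κ ℝ} {c : ℝ}
    (h : ∀ (x : ι → EuclideanSpace ℝ (Fin d)) (y : κ → EuclideanSpace ℝ (Fin d)),
      (∀ i, ‖x i‖ ≤ 1) → (∀ j, ‖y j‖ ≤ 1) → |innerPairing M x y| ≤ c) :
    GNorm d M ≤ c := by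
  refine csSup_le ⟨_, 0, 0, fun _ ↦ by simp, fun _ ↦ by simp, rfl⟩ ?_
  rintro _ ⟨x, y, hx, hy, rfl⟩
  rw [← innerPairing_apply]
  exact h x y hx hy

end GNorm

theorem GNorm_mono_loewner_general (n d : ℕ)
    (A B : Matrix (Fin n) (Fin n) ℝ)
    (h1 : (A - B).PosSemidef) (h2 : (A + B).PosSemidef) :
    GNorm d B ≤ GNorm d A :=
  GNorm_le fun x y hx hy ↦ calc
    |innerPairing B x y| ≤ (innerPairing A x x + innerPairing A y y) / 2 :=
      abs_innerPairing_le_of_posSemidef h1 h2 x y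
    _ ≤ (GNorm d A + GNorm d A) / 2 := by
      gcongr <;> exact (le_abs_self _).trans (le_GNorm A ‹_› ‹_›)
    _ = GNorm d A := add_self_div_two _

/-- If -A ⪯ B ⪯ A with A positive semidefinite, then ‖B‖_{G,d} ≤ ‖A‖_{G,d}. -/
theorem GNorm_mono_loewner (n d : ℕ) (hd : 1 ≤ d)
    (A B : Matrix (Fin n) (Fin n) ℝ) (hA : A.PosSemidef) (hB : B.IsSymm)
    (h1 : (A - B).PosSemidef) (h2 : (A + B).PosSemidef) :
    GNorm d B ≤ GNorm d A :=
  GNorm_mono_loewner_general n d A B h1 h2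
end

section
/- If A ∈ S^n is a real symmetric tridiagonal matrix, then for every d ∈ ℕ: ‖A‖_{γ,d} = |∑_{i=1}^n a_{ii}| + 2 ∑_{i=1}^{n−1} |a_{i,i+1}|. -/
open Finset
open scoped InnerProductSpace

theorem Matrix.sum_sum_eq_of_isSymm_of_tridiagonal {R : Type*} [AddCommMonoid R] :
    ∀ {n : ℕ} (B : Matrix (Fin (n + 1)) (Fin (n + 1)) R), B.IsSymm →
      (∀ i j : Fin (n + 1), (i : ℕ) + 1 < j → B i j = 0) →
      ∑ i, ∑ j, B i j = ∑ i, B i i + 2 • ∑ k : Fin n, B k.castSucc k.succ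
  | 0, B, _, _ => by simp
  | n + 1, B, hB, hband => by
    have ih := sum_sum_eq_of_isSymm_of_tridiagonal (B.submatrix Fin.succ Fin.succ)
      (hB.submatrix _) fun i j h => hband _ _ (by simpa using h)
    have hrow : ∑ j : Fin (n + 1), B 0 j.succ = B 0 1 := by
      rw [Fin.sum_univ_succ, sum_eq_zero fun j _ => hband _ _ (by simp), add_zero]
      rfl
    have hcol : ∑ i : Fin (n + 1), B i.succ 0 = B 0 1 := by simpa only [hB.apply] using hrow
    simp only [submatrix_apply, Fin.succ_castSucc] at ih
    rw [Fin.sum_univ_succ, Fin.sum_univ_succ, hrow, sum_comm (γ := Fin (n + 1)),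
      Fin.sum_univ_succ, hcol, sum_comm, ih, Fin.sum_univ_succ (fun i => B i i),
      Fin.sum_univ_succ (fun k : Fin (n + 1) => B k.castSucc k.succ)]
    simp only [Fin.castSucc_zero, Fin.succ_zero_eq_one, two_nsmul]
    abel

theorem exists_abs_eq_one_mul_eq_abs (t : ℝ) : ∃ σ : ℝ, |σ| = 1 ∧ σ * t = |t| := by
  rcases le_total 0 t with ht | ht
  · exact ⟨1, by simp, by simp [abs_of_nonneg ht]⟩
  · exact ⟨-1, by simp, by simp [abs_of_nonpos ht]⟩

theorem exists_abs_eq_one_chain_mul_eq_abs :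
    ∀ {n : ℕ} (b : Fin n → ℝ), ∃ ε : Fin (n + 1) → ℝ,
      (∀ i, |ε i| = 1) ∧ ∀ k, ε k.castSucc * ε k.succ * b k = |b k|
  | 0, _ => ⟨fun _ => 1, by simp, fun k => k.elim0⟩
  | n + 1, b => by
    obtain ⟨ε, hε, hchain⟩ := exists_abs_eq_one_chain_mul_eq_abs (Fin.tail b)
    obtain ⟨s, hs, hsb⟩ := exists_abs_eq_one_mul_eq_abs (b 0)
    have hεε : ε 0 * ε 0 = 1 := by rw [← abs_mul_abs_self, hε, one_mul]
    refine ⟨Fin.cons (s * ε 0) ε, Fin.cases (by simp [abs_mul, hs, hε]) hε, Fin.cases ?_ ?_⟩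
    · simp only [Fin.castSucc_zero, Fin.cons_zero, Fin.succ_zero_eq_one, Fin.cons_one]
      linear_combination s * b 0 * hεε + hsb
    · intro k
      simpa [← Fin.succ_castSucc, Fin.tail] using hchain k

theorem abs_add_two_mul_sum_mul_le {ι : Type*} [Fintype ι] (t : ℝ) (a c : ι → ℝ)
    (hc : ∀ k, |c k| ≤ 1) : |t + 2 * ∑ k, a k * c k| ≤ |t| + 2 * ∑ k, |a k| :=
  calc |t + 2 * ∑ k, a k * c k|
      ≤ |t| + 2 * ∑ k, |a k * c k| := by
        grw [abs_add_le, abs_mul, abs_two, abs_sum_le_sum_abs]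
    _ ≤ |t| + 2 * ∑ k, |a k| := by
        gcongr |t| + 2 * ?_
        refine sum_le_sum fun k _ => ?_
        rw [abs_mul]
        exact mul_le_of_le_one_right (abs_nonneg _) (hc k)

variable {E : Type*} [NormedAddCommGroup E] [InnerProductSpace ℝ E]

theorem exists_forall_norm_eq_one_abs_add_two_mul_sum_inner_eq {n : ℕ} {e : E} (he : ‖e‖ = 1)
    (t : ℝ) (a : Fin n → ℝ) : ∃ x : Fin (n + 1) → E, (∀ i, ‖x i‖ = 1) ∧
      |t + 2 * ∑ k, a k * ⟪x k.castSucc, x k.succ⟫_ℝ| = |t| + 2 * ∑ k, |a k| := by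
  obtain ⟨σ, hσ, hσt⟩ := exists_abs_eq_one_mul_eq_abs t
  have hσσ : σ * σ = 1 := by rw [← abs_mul_abs_self, hσ, one_mul]
  obtain ⟨ε, hε, hchain⟩ := exists_abs_eq_one_chain_mul_eq_abs fun k => σ * a k
  refine ⟨fun i => ε i • e, fun i => by simp [norm_smul, hε, he], ?_⟩
  have hinner (k : Fin n) : a k * ⟪ε k.castSucc • e, ε k.succ • e⟫_ℝ = σ * |a k| := by
    have := hchain k
    rw [abs_mul, hσ, one_mul] at this
    rw [real_inner_smul_left, real_inner_smul_right, real_inner_self_eq_norm_sq, he]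
    linear_combination σ * this - (ε k.castSucc * ε k.succ * a k) * hσσ
  simp only [hinner, ← mul_sum]
  calc |t + 2 * (σ * ∑ k, |a k|)| = |σ * t + 2 * ∑ k, (|a k|)| := by
        rw [← one_mul |_|, ← hσ, ← abs_mul]
        congr 1
        linear_combination (2 * ∑ k, |a k|) * hσσ
    _ = |t| + 2 * ∑ k, |a k| := by
        rw [hσt]
        exact abs_of_nonneg (by positivity)

theorem sum_sum_mul_inner_eq_of_tridiagonal {n : ℕ} (A : Matrix (Fin (n + 1)) (Fin (n + 1)) ℝ)
    (hA : A.IsSymm) (htri : ∀ i j : Fin (n + 1), (i : ℕ) + 1 < j → A i j = 0)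
    (x : Fin (n + 1) → E) (hx : ∀ i, ‖x i‖ = 1) :
    ∑ i, ∑ j, A i j * ⟪x i, x j⟫_ℝ =
      ∑ i, A i i + 2 * ∑ k : Fin n, A k.castSucc k.succ * ⟪x k.castSucc, x k.succ⟫_ℝ := by
  have hsymm : (Matrix.of fun i j => A i j * ⟪x i, x j⟫_ℝ).IsSymm :=
    Matrix.IsSymm.ext fun i j => by simp [hA.apply, real_inner_comm]
  have := Matrix.sum_sum_eq_of_isSymm_of_tridiagonal _ hsymm fun i j h => by simp [htri i j h]
  simpa [real_inner_self_eq_norm_sq, hx] using this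

/-- γ-seminorm of a symmetric tridiagonal matrix. -/
theorem gammaSemi_tridiagonal (n d : ℕ) (hd : 1 ≤ d)
    (A : Matrix (Fin (n + 1)) (Fin (n + 1)) ℝ) (hA : A.IsSymm)
    (htri : ∀ i j : Fin (n + 1), (i : ℕ) + 1 < (j : ℕ) → A i j = 0) :
    gammaSemi d A = |∑ i, A i i| + 2 * ∑ i : Fin n, |A i.castSucc i.succ| := by
  have hform := sum_sum_mul_inner_eq_of_tridiagonal (E := EuclideanSpace ℝ (Fin d)) A hA htri
  refine IsGreatest.csSup_eq ⟨?_, ?_⟩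
  · have he : ‖EuclideanSpace.single (⟨0, hd⟩ : Fin d) (1 : ℝ)‖ = 1 := by simp
    obtain ⟨x, hx, hval⟩ := exists_forall_norm_eq_one_abs_add_two_mul_sum_inner_eq he
      (∑ i, A i i) fun k => A k.castSucc k.succ
    exact ⟨x, hx, by rw [hform x hx, hval]⟩
  · rintro r ⟨x, hx, rfl⟩
    rw [hform x hx]
    refine abs_add_two_mul_sum_mul_le _ _ _ fun k => ?_
    simpa [hx] using abs_real_inner_le_norm (x k.castSucc) (x k.succ)
end

section
/- For a real symmetric matrix A ∈ S^n and any d ∈ ℕ, the complex Grothendieck d-seminorm equals the real Grothendieck 2d-seminorm: ‖A‖_{γ,d}^ℂ = ‖A‖_{γ,2d}^ℝ, where ‖A‖_{γ,d}^ℂ := max { |∑_{i,j} a_{ij}⟨z_i,z_j⟩_ℂ| : z_i ∈ ℂ^d, ‖z_i‖ = 1 } and ‖A‖_{γ,2d}^ℝ := max { |∑_{i,j} a_{ij}⟨x_i,x_j⟩_ℝ| : x_i ∈ ℝ^{2d}, ‖x_i‖ = 1 }. -/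
noncomputable def gammaSemiC {ι : Type*} [Fintype ι] (d : ℕ) (A : Matrix ι ι ℝ) : ℝ :=
  sSup { r | ∃ z : ι → EuclideanSpace ℂ (Fin d), (∀ i, ‖z i‖ = 1) ∧
    r = ‖∑ i, ∑ j, (A i j : ℂ) * (inner ℂ (z i) (z j) : ℂ)‖ }

/-!
Realification identifies `ℂ^d` isometrically with `ℝ^(2d)`, the real inner product being the real
part of the Hermitian one. For real symmetric `A` the Hermitian form `∑ aᵢⱼ ⟪zᵢ, zⱼ⟫_ℂ` equals its own
conjugate, so its modulus is the absolute value of its real part, which is the real form of the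
realified vectors.
-/

open scoped ComplexConjugate RealInnerProductSpace

section QuadraticForm

variable {ι : Type*} [Fintype ι]

lemma conj_sum_mul_inner_of_isSymm {E : Type*} [SeminormedAddCommGroup E] [InnerProductSpace ℂ E]
    {A : Matrix ι ι ℝ} (hA : A.IsSymm) (z : ι → E) :
    conj (∑ i, ∑ j, (A i j : ℂ) * inner ℂ (z i) (z j)) =
      ∑ i, ∑ j, (A i j : ℂ) * inner ℂ (z i) (z j) := by
  simp only [map_sum, map_mul, Complex.conj_ofReal, inner_conj_symm]
  rw [Finset.sum_comm]
  simp only [hA.apply]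

lemma norm_sum_mul_inner_of_isSymm {E : Type*} [SeminormedAddCommGroup E]
    [InnerProductSpace ℂ E] {A : Matrix ι ι ℝ} (hA : A.IsSymm) (z : ι → E) :
    ‖∑ i, ∑ j, (A i j : ℂ) * inner ℂ (z i) (z j)‖ =
      |∑ i, ∑ j, A i j * (inner ℂ (z i) (z j)).re| := by
  rw [← Complex.conj_eq_iff_re.mp (conj_sum_mul_inner_of_isSymm hA z), Complex.norm_real,
    Real.norm_eq_abs]
  simp only [Complex.re_sum, Complex.re_ofReal_mul]

lemma gammaSemi_eq_sSup_of_linearIsometryEquiv {E : Type*} [NormedAddCommGroup E]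
    [InnerProductSpace ℝ E] {d : ℕ} (e : E ≃ₗᵢ[ℝ] EuclideanSpace ℝ (Fin d)) (A : Matrix ι ι ℝ) :
    gammaSemi d A =
      sSup { r | ∃ x : ι → E, (∀ i, ‖x i‖ = 1) ∧ r = |∑ i, ∑ j, A i j * ⟪x i, x j⟫| } := by
  unfold gammaSemi
  congr 1
  ext r
  constructor
  · rintro ⟨x, hx, rfl⟩
    refine ⟨fun i => e.symm (x i), fun i => by simpa using hx i, ?_⟩
    simp only [LinearIsometryEquiv.inner_map_map]
  · rintro ⟨x, hx, rfl⟩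
    refine ⟨fun i => e (x i), fun i => by simpa using hx i, ?_⟩
    simp only [LinearIsometryEquiv.inner_map_map]

end QuadraticForm

lemma EuclideanSpace.real_inner_eq_re_inner {ι : Type*} [Fintype ι] (z w : EuclideanSpace ℂ ι) :
    ⟪z, w⟫ = (inner ℂ z w).re := by
  simp [PiLp.inner_apply, Complex.re_sum]

noncomputable def EuclideanSpace.complexEquivReal (d : ℕ) :
    EuclideanSpace ℂ (Fin d) ≃ₗᵢ[ℝ] EuclideanSpace ℝ (Fin (2 * d)) :=
  ((stdOrthonormalBasis ℝ (EuclideanSpace ℂ (Fin d))).reindex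
    (finCongr (by rw [finrank_real_of_complex, finrank_euclideanSpace_fin]))).repr

theorem gammaSemiC_eq_gammaSemi_two_mul_general (n d : ℕ)
    (A : Matrix (Fin n) (Fin n) ℝ) (hA : A.IsSymm) :
    gammaSemiC d A = gammaSemi (2 * d) A := by
  rw [gammaSemi_eq_sSup_of_linearIsometryEquiv (EuclideanSpace.complexEquivReal d), gammaSemiC]
  simp_rw [norm_sum_mul_inner_of_isSymm hA, EuclideanSpace.real_inner_eq_re_inner]

/-- For a real symmetric matrix, the complex γ-d-seminorm equals the real γ-2d-seminorm. -/
theorem gammaSemiC_eq_gammaSemi_two_mul (n d : ℕ) (hd : 1 ≤ d)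
    (A : Matrix (Fin n) (Fin n) ℝ) (hA : A.IsSymm) :
    gammaSemiC d A = gammaSemi (2 * d) A :=
  gammaSemiC_eq_gammaSemi_two_mul_general n d A hA
end

section
/- Every extreme point of the convex hull of Γ̄^n_d (the set of n×n real rank-≤d subcorrelation matrices) lies in Γ̄^n_q, where q = ⌊(−1+√(1+8n))/2⌋ + 1. In particular, every extreme point has rank at most q. -/
/-!
Write a subcorrelation matrix `G` of rank `r` as `G = B Bᵀ` with `B` an `n × r` matrix whose Gram
matrix `Bᵀ B` is invertible. If `r (r + 1) / 2 > n`, the linear map `S ↦ diag (B S Bᵀ)` from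
symmetric `r × r` matrices to `ℝⁿ` has a nonzero kernel element `S`. For small `ε` both
`G ± ε B S Bᵀ = B (1 ± ε S) Bᵀ` are again subcorrelation matrices of rank at most `r`, and they are
distinct, so `G` is not extreme. The inequality `r (r + 1) / 2 > n` holds as soon as
`r > ⌊(-1 + √(1 + 8n)) / 2⌋`.
-/

open Matrix Finset

/-- The set of n×n rank-≤ d subcorrelation matrices. -/
def subCorr (n d : ℕ) : Set (Matrix (Fin n) (Fin n) ℝ) :=
  { G | G.PosSemidef ∧ (∀ i, G i i ∈ Set.Icc (0:ℝ) 1) ∧ G.rank ≤ d }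

theorem eq_zero_of_add_mem_of_sub_mem_of_mem_extremePoints {𝕜 E : Type*} [Field 𝕜]
    [LinearOrder 𝕜] [IsStrictOrderedRing 𝕜] [AddCommGroup E] [Module 𝕜 E] {A : Set E} {x h : E}
    (hx : x ∈ A.extremePoints 𝕜) (hadd : x + h ∈ A) (hsub : x - h ∈ A) : h = 0 :=
  add_eq_left.1 <| (mem_extremePoints.1 hx).2 _ hadd _ hsub (mem_openSegment_add_sub x h) |>.1

theorem two_mul_lt_mul_succ_of_floor_lt {n r : ℕ}
    (h : ⌊(-1 + Real.sqrt (1 + 8 * (n : ℝ))) / 2⌋₊ < r) : 2 * n < r * (r + 1) := by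
  have hsqrt : Real.sqrt (1 + 8 * (n : ℝ)) < 2 * r + 1 := by
    linarith [Nat.lt_of_floor_lt h]
  have hsq := (Real.sqrt_lt' (by positivity)).1 hsqrt
  exact_mod_cast (by nlinarith : (2 * n : ℝ) < r * (r + 1))

theorem Matrix.neg_mul_sum_sq_le_dotProduct_mulVec {ι : Type*} [Fintype ι] (S : Matrix ι ι ℝ)
    (x : ι → ℝ) : -((∑ j, ∑ k, |S j k|) * ∑ l, x l ^ 2) ≤ x ⬝ᵥ S *ᵥ x := by
  have hsq (j : ι) : x j ^ 2 ≤ ∑ l, x l ^ 2 :=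
    single_le_sum (fun l _ => sq_nonneg (x l)) (mem_univ j)
  have hprod (j k : ι) : |x j * x k| ≤ ∑ l, x l ^ 2 := by
    rw [abs_mul]
    nlinarith [hsq j, hsq k, abs_nonneg (x j), abs_nonneg (x k), sq_abs (x j), sq_abs (x k)]
  set T := ∑ l, x l ^ 2 -- keeps `simp` from distributing this factor
  simp only [dotProduct, mulVec, mul_sum, sum_mul, ← sum_neg_distrib]
  gcongr with j _ k _
  have := neg_abs_le (S j k * (x j * x k))
  rw [abs_mul] at this
  nlinarith [mul_le_mul_of_nonneg_left (hprod j k) (abs_nonneg (S j k))]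

theorem Matrix.posSemidef_one_add_of_sum_abs_le_one {ι : Type*} [Fintype ι] [DecidableEq ι]
    {S : Matrix ι ι ℝ} (hS : S.IsHermitian) (h : ∑ j, ∑ k, |S j k| ≤ 1) : (1 + S).PosSemidef := by
  refine posSemidef_iff_dotProduct_mulVec.2 ⟨isHermitian_one.add hS, fun x => ?_⟩
  have hform : star x ⬝ᵥ (1 + S) *ᵥ x = ∑ l, x l ^ 2 + x ⬝ᵥ S *ᵥ x := by
    simp [add_mulVec, dotProduct, sq, mul_add, sum_add_distrib]
  rw [hform]
  nlinarith [neg_mul_sum_sq_le_dotProduct_mulVec S x,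
    sum_nonneg fun l (_ : l ∈ univ) => sq_nonneg (x l)]

theorem Matrix.IsHermitian.exists_pos_posSemidef_one_add_smul {ι : Type*} [Fintype ι]
    [DecidableEq ι] {S : Matrix ι ι ℝ} (hS : S.IsHermitian) :
    ∃ ε > 0, ∀ t : ℝ, |t| ≤ ε → (1 + t • S).PosSemidef := by
  set C := ∑ j, ∑ k, |S j k|
  refine ⟨(C + 1)⁻¹, by positivity, fun t ht =>
    posSemidef_one_add_of_sum_abs_le_one (hS.smul (.all t)) ?_⟩
  calc ∑ j, ∑ k, |(t • S) j k| = |t| * C := by simp [C, abs_mul, mul_sum]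
    _ ≤ (C + 1)⁻¹ * (C + 1) := by gcongr; linarith
    _ = 1 := inv_mul_cancel₀ (by positivity)

theorem Matrix.exists_isSymm_ne_zero_diag_mul_mul_transpose_eq_zero {K m ι : Type*} [Field K]
    [Fintype m] [Fintype ι] (B : Matrix m ι K) (h : Fintype.card m < Fintype.card (Sym2 ι)) :
    ∃ S : Matrix ι ι K, S.IsSymm ∧ S ≠ 0 ∧ ∀ i, (B * S * Bᵀ) i i = 0 := by
  -- symmetric matrices on `ι` are exactly the functions on `Sym2 ι`
  let symm : (Sym2 ι → K) →ₗ[K] Matrix ι ι K :=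
    { toFun := fun c => of fun j k => c s(j, k)
      map_add' := fun _ _ => rfl
      map_smul' := fun _ _ => rfl }
  let diagConj : (Sym2 ι → K) →ₗ[K] m → K :=
    { toFun := fun c i => (B * symm c * Bᵀ) i i
      map_add' := fun c c' => by ext; simp [Matrix.mul_add, Matrix.add_mul]
      map_smul' := fun a c => by ext; simp }
  obtain ⟨c, hc, hc0⟩ := Submodule.exists_mem_ne_zero_of_ne_bot <|
    LinearMap.ker_ne_bot_of_finrank_lt (f := diagConj) (by simpa using h)
  refine ⟨symm c, ?_, fun hS => hc0 ?_, fun i => congrFun hc i⟩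
  · ext j k
    exact congrArg c Sym2.eq_swap
  · ext z
    induction z using Sym2.ind with
    | _ j k => exact congrFun (congrFun hS j) k

theorem Matrix.eq_zero_of_mul_mul_transpose_eq_zero {R m ι : Type*} [CommRing R] [Fintype m]
    [Fintype ι] [DecidableEq ι] {B : Matrix m ι R} (hB : IsUnit (Bᵀ * B)) {S : Matrix ι ι R}
    (h : B * S * Bᵀ = 0) : S = 0 := by
  have : Bᵀ * B * S * (Bᵀ * B) = 0 := by
    simp only [Matrix.mul_assoc] at h ⊢
    rw [← Matrix.mul_assoc S, ← Matrix.mul_assoc B, h, Matrix.zero_mul, Matrix.mul_zero]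
  rwa [hB.mul_left_eq_zero, hB.mul_right_eq_zero] at this

theorem Matrix.PosSemidef.exists_eq_mul_transpose {m : Type*} [Fintype m] [DecidableEq m]
    {G : Matrix m m ℝ} (hG : G.PosSemidef) :
    ∃ B : Matrix m (Fin G.rank) ℝ, G = B * Bᵀ ∧ IsUnit (Bᵀ * B) := by
  set eig := hG.1.eigenvalues
  set U : Matrix m m ℝ := (hG.1.eigenvectorUnitary : Matrix m m ℝ)
  set A : Matrix m m ℝ := U * diagonal fun j => √(eig j)
  have hsqrt : (diagonal fun j => √(eig j)) * diagonal (fun j => √(eig j)) = diagonal eig := by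
    simp [Real.mul_self_sqrt (hG.eigenvalues_nonneg _), eig]
  have hAAt : A * Aᵀ = G := by
    conv_rhs => rw [hG.1.spectral_theorem, Unitary.conjStarAlgAut_apply]
    simp [A, U, Matrix.mul_assoc, ← Matrix.mul_assoc (diagonal _), hsqrt, eig,
      star_eq_conjTranspose]
  have hAtA : Aᵀ * A = diagonal eig := by
    have hU : Uᵀ * U = 1 := Unitary.coe_star_mul_self hG.1.eigenvectorUnitary
    simp only [A, transpose_mul, diagonal_transpose, Matrix.mul_assoc]
    rw [← Matrix.mul_assoc Uᵀ, hU, Matrix.one_mul, hsqrt]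
  let e : {j // eig j ≠ 0} ≃ Fin G.rank :=
    Fintype.equivFinOfCardEq hG.1.rank_eq_card_non_zero_eigs.symm
  set col : Fin G.rank → m := Subtype.val ∘ e.symm
  have hcol : Function.Injective col := Subtype.val_injective.comp e.symm.injective
  refine ⟨A.submatrix id col, ?_, ?_⟩
  · have hA0 (i j : m) (hj : eig j = 0) : A i j = 0 := by simp [A, mul_diagonal, hj]
    refine hAAt.symm.trans ?_
    ext i k
    simp only [mul_apply, submatrix_apply, transpose_apply, id]
    calc ∑ j, A i j * A k j = ∑ j ∈ univ.filter (eig · ≠ 0), A i j * A k j  := by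
          rw [sum_filter_of_ne]
          exact fun j _ hj hj0 => hj (by rw [hA0 i j hj0, zero_mul])
      _ = ∑ j : {j // eig j ≠ 0}, A i j * A k j := sum_subtype _ (by simp) _
      _ = ∑ r, A i (col r) * A k (col r) := (e.symm.sum_comp _).symm
  · rw [transpose_submatrix, ← submatrix_mul _ _ _ _ _ Function.bijective_id, hAtA,
      submatrix_diagonal _ _ hcol, isUnit_diagonal, Pi.isUnit_iff]
    exact fun r => (e.symm r).2.isUnit

theorem exists_ne_zero_add_mem_subCorr_and_sub_mem_subCorr {n d : ℕ}
    {G : Matrix (Fin n) (Fin n) ℝ} (hG : G ∈ subCorr n d) (hr : 2 * n < G.rank * (G.rank + 1)) :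
    ∃ H ≠ 0, G + H ∈ subCorr n d ∧ G - H ∈ subCorr n d := by
  obtain ⟨hpsd, hdiag, hrank⟩ := hG
  obtain ⟨B, hGB, hB⟩ := hpsd.exists_eq_mul_transpose
  have hcard : n < Fintype.card (Sym2 (Fin G.rank)) := by
    rw [Sym2.card, Fintype.card_fin, Nat.choose_two_right, Nat.lt_div_iff_mul_lt'
      (Nat.even_mul_pred_self _).two_dvd]
    simpa [mul_comm] using hr
  obtain ⟨S, hSsymm, hS0, hSdiag⟩ :=
    exists_isSymm_ne_zero_diag_mul_mul_transpose_eq_zero B (by simpa using hcard)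
  obtain ⟨ε, hε, hpsd⟩ :=
    IsHermitian.exists_pos_posSemidef_one_add_smul (isHermitian_iff_isSymm.2 hSsymm)
  have hmem (t : ℝ) (ht : |t| ≤ ε) : G + B * (t • S) * Bᵀ ∈ subCorr n d := by
    have hfact : G + B * (t • S) * Bᵀ = B * (1 + t • S) * Bᵀ := by
      nth_rw 1 [hGB]
      rw [Matrix.mul_add, Matrix.add_mul, Matrix.mul_one]
    refine ⟨?_, fun i => ?_, ?_⟩
    · rw [hfact]
      simpa using (hpsd t ht).mul_mul_conjTranspose_same B
    · simpa [Matrix.mul_smul, hSdiag] using hdiag i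
    · calc (G + B * (t • S) * Bᵀ).rank = (B * (1 + t • S) * Bᵀ).rank := by rw [hfact]
        _ ≤ G.rank := (rank_mul_le_left _ _).trans <| (rank_mul_le_left _ _).trans <|
            (rank_le_card_width B).trans_eq (Fintype.card_fin _)
        _ ≤ d := hrank
  refine ⟨B * (ε • S) * Bᵀ, fun h => hS0 ?_, hmem ε (abs_of_pos hε).le, ?_⟩
  · exact (smul_eq_zero.1 (eq_zero_of_mul_mul_transpose_eq_zero hB h)).resolve_left hε.ne'
  · simpa [sub_eq_add_neg, Matrix.mul_smul, Matrix.smul_mul] using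
      hmem (-ε) (by rw [abs_neg, abs_of_pos hε])

/-- Every extreme point of the convex hull of the rank-≤ d subcorrelation matrices
lies among the rank-≤ q subcorrelation matrices, q = ⌊(−1+√(1+8n))/2⌋ + 1. -/
theorem extremePoints_convexHull_subCorr (n d : ℕ) :
    Set.extremePoints ℝ (convexHull ℝ (subCorr n d)) ⊆
      subCorr n (⌊(-1 + Real.sqrt (1 + 8 * (n : ℝ))) / 2⌋₊ + 1) := by
  intro G hG
  have hmem : G ∈ subCorr n d := extremePoints_convexHull_subset hG
  refine ⟨hmem.1, hmem.2.1, not_lt.1 fun hlt => ?_⟩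
  obtain ⟨H, hH0, hadd, hsub⟩ := exists_ne_zero_add_mem_subCorr_and_sub_mem_subCorr hmem
    (two_mul_lt_mul_succ_of_floor_lt (Nat.lt_of_succ_lt hlt))
  exact hH0 <| eq_zero_of_add_mem_of_sub_mem_of_mem_extremePoints hG
    (subset_convexHull ℝ _ hadd) (subset_convexHull ℝ _ hsub)
end

section
/- If d(d+1)/2 > n, then for every real symmetric A ∈ S^n one has ‖A‖_{γ,d} = ‖A‖_{γ,n} and ‖A‖_{Γ,d} = ‖A‖_{Γ,n}, i.e. the Grothendieck d-seminorm and d-norm stabilize at d-values with d(d+1)/2 > n. -/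
/-!
A value of either norm is `|⟨A, X⟩|` for a Gram matrix `X` of vectors in `ℝ^d`, i.e. a positive
semidefinite matrix of rank at most `d` with prescribed diagonal (the squared norms). By
compactness the supremum over `ℝ^n` is attained at some `X = Cᴴ C`, `C` of size `r × n`. If
`r(r+1)/2 > n`, counting dimensions gives a nonzero symmetric `r × r` matrix `Δ` with
`diag (Cᴴ Δ C) = 0`. With `t = 1 / max |eigenvalue of Δ|`, both `X ± t Cᴴ Δ C` are still
feasible, so maximality forces `⟨A, Cᴴ Δ C⟩ = 0`, and one of `1 ± t Δ` is singular: this yields a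
maximizer of smaller rank (Pataki's rank reduction). Iterating, some maximizer has rank `≤ d`.
-/

open Matrix Module Submodule
open scoped MatrixOrder

theorem exists_linearIsometry_of_finrank_le {𝕜 V W : Type*} [RCLike 𝕜]
    [NormedAddCommGroup V] [InnerProductSpace 𝕜 V] [FiniteDimensional 𝕜 V]
    [NormedAddCommGroup W] [InnerProductSpace 𝕜 W] [FiniteDimensional 𝕜 W]
    (h : finrank 𝕜 V ≤ finrank 𝕜 W) : Nonempty (V →ₗᵢ[𝕜] W) := by
  let bV := (stdOrthonormalBasis 𝕜 V).toBasis
  let bW := stdOrthonormalBasis 𝕜 W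
  let f : V →ₗ[𝕜] W := bV.constr 𝕜 (bW ∘ Fin.castLE h)
  have hf : f ∘ bV = bW ∘ Fin.castLE h := funext fun i => bV.constr_basis 𝕜 _ i
  refine ⟨f.isometryOfOrthonormal (v := bV) (by simp [bV]) ?_⟩
  rw [hf]
  exact bW.orthonormal.comp _ (Fin.castLE_injective h)

section Gram

variable {ι : Type*}

theorem norm_eq_of_gram_apply_self_eq {E F : Type*} [NormedAddCommGroup E] [InnerProductSpace ℝ E]
    [NormedAddCommGroup F] [InnerProductSpace ℝ F] {x : ι → E} {y : ι → F} {i : ι}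
    (h : gram ℝ x i i = gram ℝ y i i) : ‖x i‖ = ‖y i‖ := by
  rw [gram_apply, gram_apply, real_inner_self_eq_norm_sq, real_inner_self_eq_norm_sq] at h
  exact (pow_left_inj₀ (norm_nonneg _) (norm_nonneg _) two_ne_zero).mp h

variable [Fintype ι]

theorem exists_gram_eq_of_finrank_span_le {𝕜 E : Type*} [RCLike 𝕜] [NormedAddCommGroup E]
    [InnerProductSpace 𝕜 E] (v : ι → E) {d : ℕ} (h : finrank 𝕜 (span 𝕜 (Set.range v)) ≤ d) :
    ∃ x : ι → EuclideanSpace 𝕜 (Fin d), gram 𝕜 x = gram 𝕜 v := by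
  have := FiniteDimensional.span_of_finite 𝕜 (Set.finite_range v)
  obtain ⟨L⟩ := exists_linearIsometry_of_finrank_le (𝕜 := 𝕜) (V := span 𝕜 (Set.range v))
    (W := EuclideanSpace 𝕜 (Fin d)) (by simpa using h)
  refine ⟨fun i => L ⟨v i, subset_span (Set.mem_range_self i)⟩, ?_⟩
  ext i j
  simp [gram_apply]

theorem Matrix.PosSemidef.exists_gram_eq {X : Matrix ι ι ℝ} (hX : X.PosSemidef) :
    ∃ v : ι → EuclideanSpace ℝ ι, gram ℝ v = X ∧ finrank ℝ (span ℝ (Set.range v)) = X.rank := by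
  classical
  obtain ⟨B, rfl⟩ := CStarAlgebra.nonneg_iff_eq_star_mul_self.mp hX.nonneg
  refine ⟨fun j => WithLp.toLp 2 (B.col j), ?_, ?_⟩
  · ext i j
    simp [gram_apply, mul_apply, PiLp.inner_apply, mul_comm]
  · have hrange : Set.range (fun j => WithLp.toLp 2 (B.col j)) =
        ((WithLp.linearEquiv 2 ℝ (ι → ℝ)).symm : (ι → ℝ) →ₗ[ℝ] _) '' Set.range B.col := by
      rw [← Set.range_comp]; rfl
    rw [hrange, span_image, LinearEquiv.finrank_map_eq, star_eq_conjTranspose,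
      rank_conjTranspose_mul_self, rank_eq_finrank_span_cols]

theorem Matrix.PosSemidef.exists_gram_eq_of_rank_le {X : Matrix ι ι ℝ} (hX : X.PosSemidef)
    {d : ℕ} (h : X.rank ≤ d) : ∃ x : ι → EuclideanSpace ℝ (Fin d), gram ℝ x = X := by
  obtain ⟨v, rfl, hv⟩ := hX.exists_gram_eq
  exact exists_gram_eq_of_finrank_span_le v (hv ▸ h)

end Gram

section Spectral

variable {κ : Type*} [Fintype κ] [DecidableEq κ] {Δ : Matrix κ κ ℝ}

theorem Matrix.IsHermitian.one_add_smul_eq (hΔ : Δ.IsHermitian) (a : ℝ) :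
    1 + a • Δ = (hΔ.eigenvectorUnitary : Matrix κ κ ℝ) *
      diagonal (fun k => 1 + a * hΔ.eigenvalues k) *
        star (hΔ.eigenvectorUnitary : Matrix κ κ ℝ) := by
  set U := (hΔ.eigenvectorUnitary : Matrix κ κ ℝ)
  have hU : U * star U = 1 := Unitary.mul_star_self_of_mem hΔ.eigenvectorUnitary.2
  have hdiag : diagonal (fun k => 1 + a * hΔ.eigenvalues k) =
      1 + a • diagonal (RCLike.ofReal ∘ hΔ.eigenvalues) := by
    rw [← diagonal_one, ← diagonal_smul, ← diagonal_add]
    rfl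
  rw [hdiag, Matrix.mul_add, Matrix.add_mul, Matrix.mul_one, hU, Matrix.mul_smul, Matrix.smul_mul,
    ← Unitary.conjStarAlgAut_apply (S := ℝ), ← hΔ.spectral_theorem]

theorem Matrix.IsHermitian.posSemidef_one_add_smul (hΔ : Δ.IsHermitian) {a : ℝ}
    (ha : ∀ k, 0 ≤ 1 + a * hΔ.eigenvalues k) : (1 + a • Δ).PosSemidef := by
  rw [hΔ.one_add_smul_eq]
  exact (posSemidef_diagonal_iff.mpr ha).mul_mul_conjTranspose_same _

theorem Matrix.IsHermitian.rank_one_add_smul (hΔ : Δ.IsHermitian) (a : ℝ) :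
    (1 + a • Δ).rank = Fintype.card {k // 1 + a * hΔ.eigenvalues k ≠ 0} := by
  classical
  have hU := UnitaryGroup.det_isUnit hΔ.eigenvectorUnitary
  have hU' : IsUnit (star (hΔ.eigenvectorUnitary : Matrix κ κ ℝ)).det := by
    simpa using UnitaryGroup.det_isUnit (star hΔ.eigenvectorUnitary)
  rw [hΔ.one_add_smul_eq, rank_mul_eq_left_of_isUnit_det _ _ hU',
    rank_mul_eq_right_of_isUnit_det _ _ hU, rank_diagonal]

theorem Matrix.IsHermitian.exists_posSemidef_one_add_smul_rank_lt (hΔ : Δ.IsHermitian)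
    (hne : Δ ≠ 0) : ∃ t : ℝ, t ≠ 0 ∧ (1 + t • Δ).PosSemidef ∧ (1 + (-t) • Δ).PosSemidef ∧
      (1 + t • Δ).rank < Fintype.card κ := by
  set μ := hΔ.eigenvalues
  obtain ⟨k₁, hk₁⟩ : ∃ k, μ k ≠ 0 := by
    by_contra! h
    exact hne (hΔ.eigenvalues_eq_zero_iff.mp (funext h))
  have : Nonempty κ := ⟨k₁⟩
  obtain ⟨k₀, hk₀⟩ := Finite.exists_max fun k => |μ k|
  have hμ₀ : μ k₀ ≠ 0 := abs_pos.mp ((abs_pos.mpr hk₁).trans_le (hk₀ k₁))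
  have hpsd : ∀ a, |a| * |μ k₀| ≤ 1 → (1 + a • Δ).PosSemidef := fun a ha =>
    hΔ.posSemidef_one_add_smul fun k => by
      have := (abs_mul a (μ k)).symm ▸ mul_le_mul_of_nonneg_left (hk₀ k) (abs_nonneg a)
      linarith [neg_abs_le (a * μ k)]
  have hμ₀' : |(μ k₀)⁻¹| * |μ k₀| = 1 := by rw [← abs_mul, inv_mul_cancel₀ hμ₀, abs_one]
  refine ⟨-(μ k₀)⁻¹, by simpa using hμ₀, hpsd _ (by rw [abs_neg, hμ₀']),
    hpsd _ (by rw [neg_neg, hμ₀']), ?_⟩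
  rw [hΔ.rank_one_add_smul]
  refine Fintype.card_subtype_lt (x := k₀) ?_
  simp [μ, hμ₀]

end Spectral

theorem eq_zero_of_abs_add_le_of_abs_sub_le {a b : ℝ} (h₁ : |a + b| ≤ |a|) (h₂ : |a - b| ≤ |a|) :
    b = 0 := by
  have h₁' := sq_le_sq.mpr (abs_le_abs_of_nonneg (abs_nonneg _) h₁)
  have h₂' := sq_le_sq.mpr (abs_le_abs_of_nonneg (abs_nonneg _) h₂)
  simp only [sq_abs] at h₁' h₂'
  nlinarith [sq_nonneg b]

section RankReduction

variable {ι κ : Type*} [Fintype ι] [Fintype κ]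

theorem exists_isHermitian_ne_zero_diag_conjTranspose_mul_mul_eq_zero (C : Matrix κ ι ℝ)
    (h : 2 * Fintype.card ι < Fintype.card κ * (Fintype.card κ + 1)) :
    ∃ Δ : Matrix κ κ ℝ, Δ.IsHermitian ∧ Δ ≠ 0 ∧ diag (Cᴴ * Δ * C) = 0 := by
  -- symmetric matrices are parametrized by functions on unordered pairs
  let sym (c : Sym2 κ → ℝ) : Matrix κ κ ℝ := of fun k l => c s(k, l)
  let L : (Sym2 κ → ℝ) →ₗ[ℝ] ι → ℝ :=
    { toFun c := diag (Cᴴ * sym c * C)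
      map_add' c c' := by
        simp only [show sym (c + c') = sym c + sym c' from rfl, Matrix.mul_add, Matrix.add_mul,
          diag_add]
      map_smul' a c := by
        simp only [show sym (a • c) = a • sym c from rfl, Matrix.mul_smul, Matrix.smul_mul,
          diag_smul, RingHom.id_apply] }
  have hdim : finrank ℝ (ι → ℝ) < finrank ℝ (Sym2 κ → ℝ) := by
    obtain ⟨m, hm⟩ := Nat.even_mul_succ_self (Fintype.card κ)
    rw [finrank_fintype_fun_eq_card, finrank_fintype_fun_eq_card, Sym2.card,
      Nat.choose_two_right, Nat.add_sub_cancel, Nat.mul_comm, hm]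
    omega
  obtain ⟨c, hc, hc0⟩ :=
    (Submodule.ne_bot_iff _).mp (LinearMap.ker_ne_bot_of_finrank_lt (f := L) hdim)
  refine ⟨sym c, ?_, fun h0 => hc0 (funext fun z => ?_), LinearMap.mem_ker.mp hc⟩
  · ext k l
    exact congrArg c Sym2.eq_swap
  · induction z using Sym2.ind with
    | _ k l => exact congr_fun₂ h0 k l

theorem exists_rank_lt_of_forall_abs_le [DecidableEq κ] (φ : Matrix ι ι ℝ →ₗ[ℝ] ℝ)
    (C : Matrix κ ι ℝ) (h : 2 * Fintype.card ι < Fintype.card κ * (Fintype.card κ + 1))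
    (hmax : ∀ Y : Matrix ι ι ℝ, Y.PosSemidef → diag Y = diag (Cᴴ * C) → |φ Y| ≤ |φ (Cᴴ * C)|) :
    ∃ Y : Matrix ι ι ℝ, Y.PosSemidef ∧ diag Y = diag (Cᴴ * C) ∧ φ Y = φ (Cᴴ * C) ∧
      Y.rank < Fintype.card κ := by
  obtain ⟨Δ, hΔ, hΔ0, hdiag⟩ := exists_isHermitian_ne_zero_diag_conjTranspose_mul_mul_eq_zero C h
  obtain ⟨t, ht, hpos, hneg, hrank⟩ := hΔ.exists_posSemidef_one_add_smul_rank_lt hΔ0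
  set M := Cᴴ * Δ * C
  have hconj (a : ℝ) : Cᴴ * (1 + a • Δ) * C = Cᴴ * C + a • M := by
    simp only [M, Matrix.mul_add, Matrix.add_mul, Matrix.mul_one, Matrix.mul_smul, Matrix.smul_mul]
  have hpsd {a : ℝ} (ha : (1 + a • Δ).PosSemidef) : (Cᴴ * C + a • M).PosSemidef := by
    rw [← hconj]
    simpa only [conjTranspose_conjTranspose] using ha.mul_mul_conjTranspose_same Cᴴ
  have hdiag' (a : ℝ) : diag (Cᴴ * C + a • M) = diag (Cᴴ * C) := by
    rw [diag_add, diag_smul, hdiag, smul_zero, add_zero]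
  have hφM : φ M = 0 := by
    have h₁ := hmax _ (hpsd hpos) (hdiag' t)
    have h₂ := hmax _ (hpsd hneg) (hdiag' (-t))
    simp only [map_add, map_smul, smul_eq_mul, neg_mul, ← sub_eq_add_neg] at h₁ h₂
    exact (mul_eq_zero.mp (eq_zero_of_abs_add_le_of_abs_sub_le h₁ h₂)).resolve_left ht
  refine ⟨Cᴴ * C + t • M, hpsd hpos, hdiag' t, by simp [hφM], ?_⟩
  calc (Cᴴ * C + t • M).rank = (Cᴴ * ((1 + t • Δ) * C)).rank := by rw [← hconj, Matrix.mul_assoc]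
    _ ≤ (1 + t • Δ).rank := (rank_mul_le_right _ _).trans (rank_mul_le_left _ _)
    _ < Fintype.card κ := hrank

end RankReduction

def entrywisePairing {ι : Type*} [Fintype ι] (A : Matrix ι ι ℝ) : Matrix ι ι ℝ →ₗ[ℝ] ℝ where
  toFun X := ∑ i, ∑ j, A i j * X i j
  map_add' X Y := by simp only [Matrix.add_apply, mul_add, Finset.sum_add_distrib]
  map_smul' a X := by
    simp only [Matrix.smul_apply, smul_eq_mul, Finset.mul_sum, RingHom.id_apply, mul_left_comm]

section GramValues

variable {ι : Type*} [Fintype ι] (φ : Matrix ι ι ℝ →ₗ[ℝ] ℝ)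

theorem Matrix.PosSemidef.exists_rank_le_of_forall_abs_le {X : Matrix ι ι ℝ} (hX : X.PosSemidef)
    {d : ℕ} (hd : 2 * Fintype.card ι < d * (d + 1))
    (hmax : ∀ Y : Matrix ι ι ℝ, Y.PosSemidef → diag Y = diag X → |φ Y| ≤ |φ X|) :
    ∃ Y : Matrix ι ι ℝ, Y.PosSemidef ∧ diag Y = diag X ∧ φ Y = φ X ∧ Y.rank ≤ d := by
  induction hr : X.rank using Nat.strong_induction_on generalizing X with
  | _ r ih =>
  by_cases hrd : r ≤ d
  · exact ⟨X, hX, rfl, rfl, hr ▸ hrd⟩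
  obtain ⟨x, rfl⟩ := hX.exists_gram_eq_of_rank_le hr.le
  rw [gram_eq_conjTranspose_mul (EuclideanSpace.basisFun (Fin r) ℝ)] at hmax ⊢
  have hr' : 2 * Fintype.card ι < Fintype.card (Fin r) * (Fintype.card (Fin r) + 1) := by
    rw [Fintype.card_fin]
    exact hd.trans_le (Nat.mul_le_mul (by omega) (by omega))
  obtain ⟨Y, hY, hYX, hφY, hYr⟩ := exists_rank_lt_of_forall_abs_le φ _ hr' hmax
  obtain ⟨Z, hZ, hZY, hφZ, hZd⟩ := ih _ (by simpa using hYr) hY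
    (fun W hW hWY => hφY ▸ hmax W hW (hWY.trans hYX)) rfl
  exact ⟨Z, hZ, hZY.trans hYX, hφZ.trans hφY, hZd⟩

-- `gammaSemi d A` and `GammaNorm d A` are `sSup (gramValues (entrywisePairing A) d s)` for
-- `s = {1}` and `s = Set.Iic 1` respectively.
def gramValues (d : ℕ) (s : Set ℝ) : Set ℝ :=
  {r | ∃ x : ι → EuclideanSpace ℝ (Fin d), (∀ i, ‖x i‖ ∈ s) ∧ r = |φ (gram ℝ x)|}

variable {φ} {s : Set ℝ}

theorem gramValues_subset {d N : ℕ} (hN : Fintype.card ι ≤ N) :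
    gramValues φ d s ⊆ gramValues φ N s := by
  rintro _ ⟨x, hx, rfl⟩
  obtain ⟨y, hy⟩ :=
    exists_gram_eq_of_finrank_span_le x ((finrank_range_le_card (R := ℝ) x).trans hN)
  exact ⟨y, fun i => norm_eq_of_gram_apply_self_eq (congr_fun₂ hy i i) ▸ hx i, by rw [hy]⟩

theorem exists_isGreatest_gramValues {N : ℕ} (hs : IsClosed s) (hs' : BddAbove s)
    (hne : (gramValues φ N s).Nonempty) : ∃ m, IsGreatest (gramValues φ N s) m := by
  obtain ⟨b, hb⟩ := hs'
  let K : Set (ι → EuclideanSpace ℝ (Fin N)) := Set.univ.pi fun _ => norm ⁻¹' s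
  have hK : IsCompact K := isCompact_univ_pi fun _ =>
    Metric.isCompact_of_isClosed_isBounded (hs.preimage continuous_norm)
      ((Metric.isBounded_closedBall (x := 0) (r := b)).subset fun y hy => by
        simpa using hb hy)
  have hcont : Continuous fun x : ι → EuclideanSpace ℝ (Fin N) => |φ (gram ℝ x)| :=
    continuous_abs.comp <| φ.continuous_of_finiteDimensional.comp <|
      continuous_pi fun i => continuous_pi fun j => by
        simpa only [gram_apply] using (continuous_apply i).inner (𝕜 := ℝ) (continuous_apply j)
  obtain ⟨_, ⟨x₀, hx₀, rfl⟩⟩ := hne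
  obtain ⟨x, hx, hmax⟩ := hK.exists_isMaxOn ⟨x₀, fun i _ => hx₀ i⟩ hcont.continuousOn
  exact ⟨_, ⟨x, fun i => hx i trivial, rfl⟩, fun _ ⟨y, hy, hr⟩ => hr ▸ hmax fun i _ => hy i⟩

theorem exists_isGreatest_gramValues_of_two_mul_card_lt {d : ℕ}
    (hd : 2 * Fintype.card ι < d * (d + 1)) (hs : IsClosed s) (hs' : BddAbove s)
    (hne : (gramValues φ d s).Nonempty) :
    ∃ m, IsGreatest (gramValues φ d s) m ∧ ∀ N, m ∈ upperBounds (gramValues φ N s) := by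
  obtain ⟨_, ⟨x, hx, rfl⟩, hmax⟩ :=
    exists_isGreatest_gramValues hs hs' (hne.mono (gramValues_subset le_rfl))
  have hub (N : ℕ) : |φ (gram ℝ x)| ∈ upperBounds (gramValues φ N s) :=
    fun _ hr => hmax (gramValues_subset le_rfl hr)
  obtain ⟨Y, hY, hYx, hφY, hYd⟩ := (posSemidef_gram ℝ x).exists_rank_le_of_forall_abs_le φ hd
    fun Y hY hYx => by
      obtain ⟨y, rfl⟩ := hY.exists_gram_eq_of_rank_le (d := Fintype.card ι) (rank_le_card_height Y)
      exact hmax ⟨y, fun i => norm_eq_of_gram_apply_self_eq (congr_fun hYx i) ▸ hx i, rfl⟩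
  obtain ⟨y, rfl⟩ := hY.exists_gram_eq_of_rank_le hYd
  exact ⟨_, ⟨⟨y, fun i => norm_eq_of_gram_apply_self_eq (congr_fun hYx i) ▸ hx i, by rw [hφY]⟩,
    hub d⟩, hub⟩

theorem sSup_gramValues_eq {d N : ℕ} (hd : 2 * Fintype.card ι < d * (d + 1))
    (hN : Fintype.card ι ≤ N) (hs : IsClosed s) (hs' : BddAbove s)
    (hne : (gramValues φ d s).Nonempty) :
    sSup (gramValues φ d s) = sSup (gramValues φ N s) := by
  obtain ⟨m, hm, hub⟩ := exists_isGreatest_gramValues_of_two_mul_card_lt hd hs hs' hne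
  rw [hm.csSup_eq, IsGreatest.csSup_eq ⟨gramValues_subset hN hm.1, hub N⟩]

end GramValues

theorem grothendieck_norms_stabilize_general (n d : ℕ) (hd : 2 * n < d * (d + 1))
    (A : Matrix (Fin n) (Fin n) ℝ) :
    gammaSemi d A = gammaSemi n A ∧ GammaNorm d A = GammaNorm n A := by
  have hd' : 2 * Fintype.card (Fin n) < d * (d + 1) := by rwa [Fintype.card_fin]
  have hd0 : 0 < d := Nat.pos_of_ne_zero fun h => by simp [h] at hd
  let e : EuclideanSpace ℝ (Fin d) := EuclideanSpace.single ⟨0, hd0⟩ 1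
  have he : ‖e‖ = 1 := by simp [e]
  exact ⟨sSup_gramValues_eq (φ := entrywisePairing A) hd' (Fintype.card_fin n).le
      isClosed_singleton bddAbove_singleton ⟨_, fun _ => e, fun _ => he, rfl⟩,
    sSup_gramValues_eq (φ := entrywisePairing A) hd' (Fintype.card_fin n).le
      isClosed_Iic bddAbove_Iic ⟨_, fun _ => e, fun _ => he.le, rfl⟩⟩

/-- If d(d+1)/2 > n then the Grothendieck d-(semi)norms have already stabilized. -/
theorem grothendieck_norms_stabilize (n d : ℕ) (hd : 2 * n < d * (d + 1))
    (A : Matrix (Fin n) (Fin n) ℝ) (hA : A.IsSymm) :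
    gammaSemi d A = gammaSemi n A ∧ GammaNorm d A = GammaNorm n A :=
  grothendieck_norms_stabilize_general n d hd A
end

section
/- Every symmetric diagonally dominant matrix A ∈ S^n (real, with a_{ii} ≥ ∑_{j≠i} |a_{ij}| for all i) admits a unique decomposition A = H + L where H is diagonally dominant with all entries nonnegative, L satisfies L𝟙 = 0 and ℓ_{ij} ≤ 0 for i ≠ j (i.e. L is a weighted graph Laplacian), and h_{ij} ℓ_{ij} = 0 for all i ≠ j. -/
/-!
Off the diagonal the decomposition is forced: `h + ℓ = a` with `h ≥ 0 ≥ ℓ` and `h ℓ = 0`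
leaves only `h = a⁺`, `ℓ = -a⁻`. The condition `L 𝟙 = 0` then fixes the diagonal of `L`, so `L`
is the weighted Laplacian with weights `a⁻ᵢⱼ`, and `H = A - L`. The diagonal of this `H` is
`aᵢᵢ - ∑ⱼ≠ᵢ a⁻ᵢⱼ`, which dominates `∑ⱼ≠ᵢ a⁺ᵢⱼ` exactly because `a⁺ + a⁻ = |a|`.
-/

open Finset

section Scalar

variable {R : Type*} [Ring R] [LinearOrder R] [IsOrderedRing R]

theorem posPart_mul_neg_negPart_eq_zero (a : R) : a⁺ * -a⁻ = 0 := by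
  rcases le_total a 0 with ha | ha
  · rw [posPart_eq_zero.mpr ha, zero_mul]
  · rw [negPart_eq_zero.mpr ha, neg_zero, mul_zero]

theorem eq_posPart_and_eq_neg_negPart [NoZeroDivisors R] {a h l : R} (hh : 0 ≤ h) (hl : l ≤ 0)
    (hhl : h * l = 0) (hsum : h + l = a) : h = a⁺ ∧ l = -a⁻ := by
  rcases mul_eq_zero.mp hhl with rfl | rfl
  · subst hsum
    simp [posPart_eq_zero.mpr hl, negPart_eq_neg.mpr hl]
  · subst hsum
    simp [posPart_eq_self.mpr hh, negPart_eq_zero.mpr hh]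

end Scalar

section RowSums

variable {ι R : Type*} [Fintype ι] [DecidableEq ι] [Ring R]

theorem mulVec_const_one_eq_zero_iff {L : Matrix ι ι R} :
    L.mulVec (fun _ => 1) = 0 ↔ ∀ i, L i i = -∑ j ∈ univ.erase i, L i j := by
  simp only [funext_iff, Matrix.mulVec, dotProduct, mul_one, Pi.zero_apply]
  refine forall_congr' fun i => ?_
  rw [← add_sum_erase _ _ (mem_univ i), add_eq_zero_iff_eq_neg]

theorem Matrix.eq_of_mulVec_const_one_eq_zero {L L' : Matrix ι ι R}
    (hL : L.mulVec (fun _ => 1) = 0) (hL' : L'.mulVec (fun _ => 1) = 0)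
    (hoff : ∀ i j, i ≠ j → L i j = L' i j) : L = L' := by
  ext i j
  obtain rfl | hij := eq_or_ne i j
  · rw [mulVec_const_one_eq_zero_iff.mp hL, mulVec_const_one_eq_zero_iff.mp hL']
    exact congrArg _ (sum_congr rfl fun j hj => hoff i j (ne_of_mem_erase hj).symm)
  · exact hoff i j hij

/-- The Laplacian `D - W` of the weighted graph with edge weights `W i j`; the diagonal of `W`
is ignored. -/
def weightedLaplacian (W : Matrix ι ι R) : Matrix ι ι R :=
  fun i j => if i = j then ∑ k ∈ univ.erase i, W i k else -W i j

variable {W : Matrix ι ι R}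

@[simp]
theorem weightedLaplacian_apply_self (i : ι) :
    weightedLaplacian W i i = ∑ k ∈ univ.erase i, W i k :=
  if_pos rfl

theorem weightedLaplacian_apply_of_ne {i j : ι} (hij : i ≠ j) :
    weightedLaplacian W i j = -W i j :=
  if_neg hij

theorem weightedLaplacian_mulVec_const_one :
    (weightedLaplacian W).mulVec (fun _ => 1) = 0 := by
  refine mulVec_const_one_eq_zero_iff.mpr fun i => ?_
  rw [weightedLaplacian_apply_self, ← sum_neg_distrib]
  exact sum_congr rfl fun j hj => by
    rw [weightedLaplacian_apply_of_ne (ne_of_mem_erase hj).symm, neg_neg]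

theorem Matrix.IsSymm.weightedLaplacian (hW : W.IsSymm) : (weightedLaplacian W).IsSymm := by
  refine Matrix.IsSymm.ext_iff.mpr fun i j => ?_
  obtain rfl | hij := eq_or_ne i j
  · rfl
  · rw [weightedLaplacian_apply_of_ne hij, weightedLaplacian_apply_of_ne hij.symm, hW.apply]

theorem weightedLaplacian_apply_nonpos [LinearOrder R] [IsOrderedRing R]
    (hW : ∀ i j, 0 ≤ W i j) {i j : ι} (hij : i ≠ j) : weightedLaplacian W i j ≤ 0 := by
  rw [weightedLaplacian_apply_of_ne hij, neg_nonpos]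
  exact hW i j

end RowSums

section Decomposition

variable {ι R : Type*} [Fintype ι] [DecidableEq ι] [Ring R] [LinearOrder R] [IsOrderedRing R]
  {A : Matrix ι ι R}

theorem sub_weightedLaplacian_negPart_apply_of_ne {i j : ι} (hij : i ≠ j) :
    (A - weightedLaplacian (A.map (·⁻))) i j = (A i j)⁺ := by
  rw [Matrix.sub_apply, weightedLaplacian_apply_of_ne hij, Matrix.map_apply, sub_neg_eq_add]
  exact (eq_add_of_sub_eq (posPart_sub_negPart _)).symm

omit [IsOrderedRing R] in
theorem sub_weightedLaplacian_negPart_apply_self (i : ι) :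
    (A - weightedLaplacian (A.map (·⁻))) i i = A i i - ∑ k ∈ univ.erase i, (A i k)⁻ := by
  rw [Matrix.sub_apply, weightedLaplacian_apply_self]
  rfl

theorem eq_weightedLaplacian_negPart_of_eq_add [NoZeroDivisors R] {H L : Matrix ι ι R}
    (hsum : A = H + L) (hH : ∀ i j, 0 ≤ H i j) (hL1 : L.mulVec (fun _ => 1) = 0)
    (hL : ∀ i j, i ≠ j → L i j ≤ 0) (hdisj : ∀ i j, i ≠ j → H i j * L i j = 0) :
    L = weightedLaplacian (A.map (·⁻)) := by
  refine Matrix.eq_of_mulVec_const_one_eq_zero hL1 weightedLaplacian_mulVec_const_one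
    fun i j hij => ?_
  rw [weightedLaplacian_apply_of_ne hij]
  exact (eq_posPart_and_eq_neg_negPart (hH i j) (hL i j hij) (hdisj i j hij)
    (congrFun₂ hsum i j).symm).2

variable (hdd : ∀ i, ∑ j ∈ univ.erase i, |A i j| ≤ A i i)
include hdd

theorem sub_weightedLaplacian_negPart_nonneg (i j : ι) :
    0 ≤ (A - weightedLaplacian (A.map (·⁻))) i j := by
  obtain rfl | hij := eq_or_ne i j
  · rw [sub_weightedLaplacian_negPart_apply_self, sub_nonneg]
    refine le_trans (sum_le_sum fun k _ => ?_) (hdd i)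
    rw [← posPart_add_negPart]
    exact le_add_of_nonneg_left (posPart_nonneg _)
  · rw [sub_weightedLaplacian_negPart_apply_of_ne hij]
    exact posPart_nonneg _

theorem sub_weightedLaplacian_negPart_diagDominant (i : ι) :
    ∑ j ∈ univ.erase i, |(A - weightedLaplacian (A.map (·⁻))) i j| ≤
      (A - weightedLaplacian (A.map (·⁻))) i i := by
  have hoff : ∀ j ∈ univ.erase i, |(A - weightedLaplacian (A.map (·⁻))) i j| = (A i j)⁺ :=
    fun j hj => by
      rw [sub_weightedLaplacian_negPart_apply_of_ne (ne_of_mem_erase hj).symm,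
        abs_of_nonneg (posPart_nonneg _)]
  rw [sum_congr rfl hoff, sub_weightedLaplacian_negPart_apply_self, le_sub_iff_add_le,
    ← sum_add_distrib]
  simpa only [posPart_add_negPart] using hdd i

end Decomposition

/-- Unique decomposition of a symmetric diagonally dominant matrix as a sum of a
nonnegative diagonally dominant matrix and a weighted graph Laplacian with
disjoint off-diagonal supports. -/
theorem diagDominant_decomposition (n : ℕ) (A : Matrix (Fin n) (Fin n) ℝ)
    (hA : A.IsSymm) (hdd : ∀ i, ∑ j ∈ univ.erase i, |A i j| ≤ A i i) :
    ∃! HL : Matrix (Fin n) (Fin n) ℝ × Matrix (Fin n) (Fin n) ℝ,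
      A = HL.1 + HL.2 ∧
      HL.1.IsSymm ∧ (∀ i j, 0 ≤ HL.1 i j) ∧
      (∀ i, ∑ j ∈ univ.erase i, |HL.1 i j| ≤ HL.1 i i) ∧
      HL.2.IsSymm ∧ HL.2.mulVec (fun _ => (1 : ℝ)) = 0 ∧
      (∀ i j, i ≠ j → HL.2 i j ≤ 0) ∧
      (∀ i j, i ≠ j → HL.1 i j * HL.2 i j = 0) := by
  have hL : (weightedLaplacian (A.map (·⁻))).IsSymm := (hA.map _).weightedLaplacian
  refine ⟨(A - weightedLaplacian (A.map (·⁻)), weightedLaplacian (A.map (·⁻))),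
    ⟨(sub_add_cancel _ _).symm, hA.sub hL, sub_weightedLaplacian_negPart_nonneg hdd,
      sub_weightedLaplacian_negPart_diagDominant hdd, hL, weightedLaplacian_mulVec_const_one,
      fun i j => weightedLaplacian_apply_nonpos fun i j => negPart_nonneg (A i j),
      fun i j hij => ?_⟩, ?_⟩
  · dsimp only
    rw [sub_weightedLaplacian_negPart_apply_of_ne hij, weightedLaplacian_apply_of_ne hij]
    exact posPart_mul_neg_negPart_eq_zero _
  rintro ⟨H, L⟩ ⟨hsum, -, hH, -, -, hL1, hLoff, hdisj⟩
  obtain rfl := eq_weightedLaplacian_negPart_of_eq_add hsum hH hL1 hLoff hdisj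
  exact Prod.ext (eq_sub_of_add_eq hsum.symm) rfl
end

section
/- Let A ∈ S^n be real symmetric with all diagonal entries nonnegative. Then max_{x ∈ {−1,1}^n} xᵀAx = max_{x ∈ [−1,1]^n} xᵀAx, and max { tr(AX) : X PSD, x_{ii} = 1 ∀i } = max { tr(AX) : X PSD, x_{ii} ≤ 1 ∀i }. -/
/-!
Along a coordinate line the quadratic form is `t ↦ Q x + (t - xᵢ) b + (t - xᵢ)² Aᵢᵢ`, and since
`Aᵢᵢ ≥ 0` moving `xᵢ` to the endpoint `±1` on the side of the sign of `b` does not decrease it;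
rounding the coordinates one at a time, every point of the cube is dominated by a vertex.
Likewise, adding `diag (1 - Xᵢᵢ)` to a feasible `X` keeps it positive semidefinite, makes its
diagonal one and adds `∑ Aᵢᵢ (1 - Xᵢᵢ) ≥ 0` to the objective. In both problems each value set
dominates the other, so the suprema agree.
-/

open scoped Matrix

namespace Matrix

variable {ι R : Type*} [Fintype ι] [DecidableEq ι]

omit [Fintype ι] in
theorem _root_.Function.update_eq_add_smul_single [Ring R] (x : ι → R) (i : ι) (t : R) :
    Function.update x i t = x + (t - x i) • Pi.single i 1 := by
  ext j
  rcases eq_or_ne j i with rfl | hj <;> simp [*]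

theorem add_smul_single_dotProduct_mulVec [CommRing R] (A : Matrix ι ι R) (x : ι → R) (i : ι)
    (s : R) :
    (x + s • Pi.single i 1) ⬝ᵥ A *ᵥ (x + s • Pi.single i 1) =
      x ⬝ᵥ A *ᵥ x + s * ((A *ᵥ x) i + (x ᵥ* A) i) + s ^ 2 * A i i := by
  simp only [mulVec_add, mulVec_smul, add_dotProduct, dotProduct_add, smul_dotProduct,
    dotProduct_smul, single_dotProduct, mulVec_single_one, smul_eq_mul, one_mul, col_apply]
  rw [← vecMul_apply]
  ring

section LinearOrder

variable [CommRing R] [LinearOrder R] [IsStrictOrderedRing R]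

theorem exists_sign_update_dotProduct_mulVec_ge (A : Matrix ι ι R) (x : ι → R) (i : ι)
    (hAii : 0 ≤ A i i) (hxi : |x i| ≤ 1) :
    ∃ t : R, (t = 1 ∨ t = -1) ∧
      x ⬝ᵥ A *ᵥ x ≤ Function.update x i t ⬝ᵥ A *ᵥ Function.update x i t := by
  obtain ⟨hxi₁, hxi₂⟩ := abs_le.mp hxi
  simp only [Function.update_eq_add_smul_single, add_smul_single_dotProduct_mulVec]
  rcases le_total 0 ((A *ᵥ x) i + (x ᵥ* A) i) with hb | hb
  · exact ⟨1, Or.inl rfl, by nlinarith [sq_nonneg (1 - x i)]⟩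
  · exact ⟨-1, Or.inr rfl, by nlinarith [sq_nonneg (-1 - x i)]⟩

theorem exists_sign_vector_dotProduct_mulVec_ge (A : Matrix ι ι R) (hA : ∀ i, 0 ≤ A i i)
    (x : ι → R) (hx : ∀ i, |x i| ≤ 1) :
    ∃ y : ι → R, (∀ i, y i = 1 ∨ y i = -1) ∧ x ⬝ᵥ A *ᵥ x ≤ y ⬝ᵥ A *ᵥ y := by
  suffices ∀ s : Finset ι, ∀ x : ι → R, (∀ i, |x i| ≤ 1) → (∀ i ∉ s, x i = 1 ∨ x i = -1) →
      ∃ y : ι → R, (∀ i, y i = 1 ∨ y i = -1) ∧ x ⬝ᵥ A *ᵥ x ≤ y ⬝ᵥ A *ᵥ y from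
    this Finset.univ x hx (by simp)
  intro s
  induction s using Finset.induction_on with
  | empty => exact fun x _ hx => ⟨x, by simpa using hx, le_rfl⟩
  | insert i s _ ih =>
    intro x hx hxs
    obtain ⟨t, ht, hle⟩ := exists_sign_update_dotProduct_mulVec_ge A x i (hA i) (hx i)
    have hx' : ∀ j, |Function.update x i t j| ≤ 1 := by
      intro j
      rcases eq_or_ne j i with rfl | hji
      · rcases ht with rfl | rfl <;> simp
      · simpa [hji] using hx j
    have hxs' : ∀ j ∉ s, Function.update x i t j = 1 ∨ Function.update x i t j = -1 := by
      intro j hj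
      rcases eq_or_ne j i with rfl | hji
      · simpa using ht
      · simpa [hji] using hxs j (by simp [hji, hj])
    obtain ⟨y, hy, hle'⟩ := ih _ hx' hxs'
    exact ⟨y, hy, hle.trans hle'⟩

end LinearOrder

theorem trace_mul_diagonal [NonUnitalNonAssocSemiring R] (A : Matrix ι ι R) (d : ι → R) :
    (A * diagonal d).trace = ∑ i, A i i * d i := by
  simp [trace, mul_diagonal]

theorem exists_posSemidef_diag_eq_one_trace_mul_ge (A : Matrix ι ι ℝ) (hA : ∀ i, 0 ≤ A i i)
    (X : Matrix ι ι ℝ) (hX : X.PosSemidef) (hXd : ∀ i, X i i ≤ 1) :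
    ∃ Y : Matrix ι ι ℝ, Y.PosSemidef ∧ (∀ i, Y i i = 1) ∧ (A * X).trace ≤ (A * Y).trace := by
  have hd : 0 ≤ fun i => 1 - X i i := fun i => sub_nonneg.mpr (hXd i)
  refine ⟨X + diagonal fun i => 1 - X i i, hX.add (.diagonal hd), by simp, ?_⟩
  rw [mul_add, trace_add, trace_mul_diagonal, le_add_iff_nonneg_right]
  exact Finset.sum_nonneg fun i _ => mul_nonneg (hA i) (hd i)

end Matrix

theorem quadratic_cube_vertex_and_sdp_general (n : ℕ) (A : Matrix (Fin n) (Fin n) ℝ)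
    (hdiag : ∀ i, 0 ≤ A i i) :
    sSup { r | ∃ x : Fin n → ℝ, (∀ i, x i = 1 ∨ x i = -1) ∧ r = x ⬝ᵥ A.mulVec x } =
      sSup { r | ∃ x : Fin n → ℝ, (∀ i, |x i| ≤ 1) ∧ r = x ⬝ᵥ A.mulVec x } ∧
    sSup { r | ∃ X : Matrix (Fin n) (Fin n) ℝ, X.PosSemidef ∧ (∀ i, X i i = 1) ∧
        r = (A * X).trace } =
      sSup { r | ∃ X : Matrix (Fin n) (Fin n) ℝ, X.PosSemidef ∧ (∀ i, X i i ≤ 1) ∧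
        r = (A * X).trace } := by
  constructor <;> apply csSup_eq_csSup_of_forall_exists_le
  · rintro _ ⟨x, hx, rfl⟩
    exact ⟨_, ⟨x, fun i => by rcases hx i with h | h <;> simp [h], rfl⟩, le_rfl⟩
  · rintro _ ⟨x, hx, rfl⟩
    obtain ⟨y, hy, hle⟩ := Matrix.exists_sign_vector_dotProduct_mulVec_ge A hdiag x hx
    exact ⟨_, ⟨y, hy, rfl⟩, hle⟩
  · rintro _ ⟨X, hX, hXd, rfl⟩
    exact ⟨_, ⟨X, hX, fun i => (hXd i).le, rfl⟩, le_rfl⟩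
  · rintro _ ⟨X, hX, hXd, rfl⟩
    obtain ⟨Y, hY, hYd, hle⟩ := Matrix.exists_posSemidef_diag_eq_one_trace_mul_ge A hdiag X hX hXd
    exact ⟨_, ⟨Y, hY, hYd, rfl⟩, hle⟩

/-- For a symmetric matrix with nonnegative diagonal, the quadratic maximum over
the cube equals that over its vertices, and the SDP relaxation with unit
diagonal equals that with diagonal at most one. -/
theorem quadratic_cube_vertex_and_sdp (n : ℕ) (A : Matrix (Fin n) (Fin n) ℝ)
    (hA : A.IsSymm) (hdiag : ∀ i, 0 ≤ A i i) :
    sSup { r | ∃ x : Fin n → ℝ, (∀ i, x i = 1 ∨ x i = -1) ∧ r = x ⬝ᵥ A.mulVec x } =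
      sSup { r | ∃ x : Fin n → ℝ, (∀ i, |x i| ≤ 1) ∧ r = x ⬝ᵥ A.mulVec x } ∧
    sSup { r | ∃ X : Matrix (Fin n) (Fin n) ℝ, X.PosSemidef ∧ (∀ i, X i i = 1) ∧
        r = (A * X).trace } =
      sSup { r | ∃ X : Matrix (Fin n) (Fin n) ℝ, X.PosSemidef ∧ (∀ i, X i i ≤ 1) ∧
        r = (A * X).trace } :=
  quadratic_cube_vertex_and_sdp_general n A hdiag
end
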